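/- arXiv:2603.08686 — 4 statements merged into one kernel-verified Lean document; each statement's English description precedes it below -/
import Mathlib

section
/- Let ρ₃, ρ₄, α₃, α₄, c₁, c₂, c₃, c₄ be real constants, let f : ℝ² → ℝ be smooth and let g₁, g₂, h₃, h₄, s₁₂, r₁₃, r₁₄, r₂₃, r₂₄, r₃₄ : ℝ² → ℂ be smooth, with s₂₁ := −s₁₂ and r_{kj} := r_{jk}. Suppose the following bilinear equations hold identically on ℝ²: (i) (D_x³ − D_t − 6(c₃ρ₃² + c₄ρ₄²)D_x + 3i(ρ₃²c₃α₃ + ρ₄²c₄α₄))g₁·f = −3c₂s₁₂g₂^* + 3iρ₃²c₃α₃r₁₃h₃^* + 3iρ₄²c₄α₄r₁₄h₄^*; (ii) (D_x³ − D_t − 6(c₃ρ₃² + c₄ρ₄²)D_x + 3i(ρ₃²c₃α₃ + ρ₄²c₄α₄))g₂·f = −3c₁s₂₁g₁^* + 3iρ₃²c₃α₃r₂₃h₃^* + 3iρ₄²c₄α₄r₂₄h₄^*; (iii) (D_x³ − D_t + 3iα₃D_x² − 3(α₃² + 2c₃ρ₃² + 2c₄ρ₄²)D_x − 3i(c₃ρ₃²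 + c₄ρ₄²)α₃ + 3i(c₃ρ₃²α₃ + c₄ρ₄²α₄))h₃·f = −3ic₁α₃r₁₃g₁^* − 3ic₂α₃r₂₃g₂^* − 3ic₄(α₃ − α₄)ρ₄²r₃₄h₄^*; (iv) the analogue of (iii) for h₄, obtained by interchanging the roles of (α₃, ρ₃, c₃, h₃, r₁₃, r₂₃) and (α₄, ρ₄, c₄, h₄, r₁₄, r₂₄); (v) (D_x² − 2c₃ρ₃² − 2c₄ρ₄²)f·f + 2c₁|g₁|² + 2c₂|g₂|² + 2ρ₃²c₃|h₃|² + 2ρ₄²c₄|h₄|² = 0; (vi) D_x g₁·g₂ = s₁₂f; (vii) D_x g₁·h₃ − iα₃g₁h₃ = −iα₃r₁₃f; (viii) D_x g₁·h₄ − iα₄g₁h₄ = −iα₄r₁₄f; (ix) D_x g₂·h₃ − iα₃g₂h₃ = −iα₃r₂₃f; (x) D_x g₂·h₄ − iα₄g₂h₄ = −iα₄r₂₄f; (xi) D_x h₃·h₄ + i(α₃ − α₄)h₃h₄ = i(α₃ − α₄)r₃₄f. Define ω₁ = ω₂ = 3ρ₃²c₃α₃ + 3ρ₄²c₄α₄,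 ω₃ = α₃³ + 3(c₃ρ₃² + c₄ρ₄²)α₃ + 3(c₃ρ₃²α₃ + c₄ρ₄²α₄), ω₄ = α₄³ + 3(c₃ρ₃² + c₄ρ₄²)α₄ + 3(c₃ρ₃²α₃ + c₄ρ₄²α₄). Then at every point where f ≠ 0, the functions v₁ = (g₁/f)e^{−iω₁t}, v₂ = (g₂/f)e^{−iω₂t}, v₃ = ρ₃(h₃/f)e^{i(α₃x − ω₃t)}, v₄ = ρ₄(h₄/f)e^{i(α₄x − ω₄t)} satisfy the four-component Hirota equation with coefficients c₁,…,c₄. -/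
open Complex

noncomputable section

/-- Partial derivative in the first (space) variable. -/
def pdx (u : ℝ → ℝ → ℂ) : ℝ → ℝ → ℂ :=
  fun x t => deriv (fun y => u y t) x

/-- Partial derivative in the second (time) variable. -/
def pdt (u : ℝ → ℝ → ℂ) : ℝ → ℝ → ℂ :=
  fun x t => deriv (fun s => u x s) t

/-- The squared modulus of a complex number, as a complex number. -/
def sqAbs (z : ℂ) : ℂ := (‖z‖ ^ 2 : ℝ)

/-- The Hirota operator `D_x F·G`. -/
def Dx1 (F G : ℝ → ℝ → ℂ) : ℝ → ℝ → ℂ :=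
  fun x t => pdx F x t * G x t - F x t * pdx G x t

/-- The Hirota operator `D_x² F·G`. -/
def Dx2 (F G : ℝ → ℝ → ℂ) : ℝ → ℝ → ℂ :=
  fun x t => pdx (pdx F) x t * G x t - 2 * pdx F x t * pdx G x t + F x t * pdx (pdx G) x t

/-- The Hirota operator `D_x³ F·G`. -/
def Dx3 (F G : ℝ → ℝ → ℂ) : ℝ → ℝ → ℂ :=
  fun x t => pdx (pdx (pdx F)) x t * G x t - 3 * pdx (pdx F) x t * pdx G x t
    + 3 * pdx F x t * pdx (pdx G) x t - F x t * pdx (pdx (pdx G)) x t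

/-- The Hirota operator `D_t F·G`. -/
def Dt1 (F G : ℝ → ℝ → ℂ) : ℝ → ℝ → ℂ :=
  fun x t => pdt F x t * G x t - F x t * pdt G x t

/-- The four-component Hirota equation with coefficients `c₁,…,c₄`, at the point `(x,t)`. -/
def Hirota4at (c₁ c₂ c₃ c₄ : ℝ) (v₁ v₂ v₃ v₄ : ℝ → ℝ → ℂ) (x t : ℝ) : Prop :=
  ∀ v ∈ [v₁, v₂, v₃, v₄],
    pdt v x t = pdx (pdx (pdx v)) x t
      - 3 * ((c₁ : ℂ) * sqAbs (v₁ x t) + (c₂ : ℂ) * sqAbs (v₂ x t)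
          + (c₃ : ℂ) * sqAbs (v₃ x t) + (c₄ : ℂ) * sqAbs (v₄ x t)) * pdx v x t
      - 3 * v x t * ((c₁ : ℂ) * star (v₁ x t) * pdx v₁ x t
          + (c₂ : ℂ) * star (v₂ x t) * pdx v₂ x t
          + (c₃ : ℂ) * star (v₃ x t) * pdx v₃ x t
          + (c₄ : ℂ) * star (v₄ x t) * pdx v₄ x t)



lemma contDiffAt_deriv' {f : ℝ → ℂ} {x : ℝ} (hf : ContDiffAt ℝ (⊤:ℕ∞) f x) :
    ContDiffAt ℝ (⊤:ℕ∞) (deriv f) x := by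
  have h1 : ContDiffAt ℝ (⊤:ℕ∞) (fderiv ℝ f) x := hf.fderiv_right (by exact_mod_cast le_top)
  have h2 : ContDiffAt ℝ (⊤:ℕ∞) (fun y => fderiv ℝ f y (1:ℝ)) x := h1.clm_apply contDiffAt_const
  have h3 : deriv f = fun y => fderiv ℝ f y (1:ℝ) := funext fun y => (fderiv_apply_one_eq_deriv).symm
  rw [h3]; exact h2

lemma expderiv (x : ℝ) (c d : ℂ) :
    HasDerivAt (fun y : ℝ => Complex.exp (c * y + d)) (Complex.exp (c * x + d) * c) x := by
  have h0 : HasDerivAt (fun y : ℝ => (y:ℂ)) 1 x := by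
    simpa using (hasDerivAt_id x).ofReal_comp
  simpa using ((h0.const_mul c).add_const d).cexp


lemma xKey (a b : ℝ → ℂ) (ha : ContDiff ℝ (⊤:ℕ∞) a) (hb : ContDiff ℝ (⊤:ℕ∞) b)
    (α β : ℝ) (x : ℝ) (hx : b x ≠ 0) :
    ∃ q1 q2 q3 : ℂ,
      deriv a x = q1 * b x + (a x / b x) * deriv b x ∧
      deriv (deriv a) x = q2 * b x + 2*q1*deriv b x + (a x / b x) * deriv (deriv b) x ∧
      deriv (deriv (deriv a)) x = q3 * b x + 3*q2*deriv b x + 3*q1*deriv (deriv b) x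
          + (a x / b x) * deriv (deriv (deriv b)) x ∧
      deriv (fun y => a y / b y * Complex.exp (Complex.I*α*y + Complex.I*β)) x
        = (q1 + Complex.I*α*(a x / b x)) * Complex.exp (Complex.I*α*x + Complex.I*β) ∧
      deriv (deriv (fun y => a y / b y * Complex.exp (Complex.I*α*y + Complex.I*β))) x
        = (q2 + 2*Complex.I*α*q1 - α^2*(a x / b x))
            * Complex.exp (Complex.I*α*x + Complex.I*β) ∧
      deriv (deriv (deriv (fun y => a y / b y * Complex.exp (Complex.I*α*y + Complex.I*β)))) x
        = (q3 + 3*Complex.I*α*q2 - 3*α^2*q1 - Complex.I*α^3*(a x / b x))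
            * Complex.exp (Complex.I*α*x + Complex.I*β) := by
  classical
  set U : Set ℝ := {y | b y ≠ 0} with hUdef
  have hU : IsOpen U := isOpen_compl_singleton.preimage hb.continuous
  have hxU : x ∈ U := hx
  set q : ℝ → ℂ := fun y => a y / b y with hqdef
  set E : ℝ → ℂ := fun y : ℝ => Complex.exp (Complex.I*α*y + Complex.I*β) with hEdef
  have hE : ∀ y : ℝ, HasDerivAt E (Complex.I*α*E y) y := by
    intro y
    have := expderiv y (Complex.I*α) (Complex.I*β)
    simpa [hEdef, mul_comm] using this
  have hqC : ∀ y ∈ U, ContDiffAt ℝ (⊤:ℕ∞) q y := by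
    intro y hy
    have : ContDiffAt ℝ (⊤:ℕ∞) (fun z => a z * (b z)⁻¹) y :=
      (ha.contDiffAt).mul ((hb.contDiffAt).inv hy)
    simpa [hqdef, div_eq_mul_inv] using this
  have hq1C : ∀ y ∈ U, ContDiffAt ℝ (⊤:ℕ∞) (deriv q) y := fun y hy =>
    contDiffAt_deriv' (hqC y hy)
  have hq2C : ∀ y ∈ U, ContDiffAt ℝ (⊤:ℕ∞) (deriv (deriv q)) y := fun y hy =>
    contDiffAt_deriv' (hq1C y hy)
  have hqD : ∀ y ∈ U, DifferentiableAt ℝ q y := fun y hy =>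
    (hqC y hy).differentiableAt (by simp)
  have hq1D : ∀ y ∈ U, DifferentiableAt ℝ (deriv q) y := fun y hy =>
    (hq1C y hy).differentiableAt (by simp)
  have hq2D : ∀ y ∈ U, DifferentiableAt ℝ (deriv (deriv q)) y := fun y hy =>
    (hq2C y hy).differentiableAt (by simp)
  have hbD : ∀ y : ℝ, DifferentiableAt ℝ b y := fun y =>
    (hb.differentiable (by simp)) y
  have hb1D : ∀ y : ℝ, DifferentiableAt ℝ (deriv b) y := fun y =>
    (contDiffAt_deriv' hb.contDiffAt).differentiableAt (by simp)
  have hb2D : ∀ y : ℝ, DifferentiableAt ℝ (deriv (deriv b)) y := fun y =>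
    (contDiffAt_deriv' (contDiffAt_deriv' hb.contDiffAt)).differentiableAt
      (by simp)
  -- a = q * b on U
  have evab : ∀ y ∈ U, a =ᶠ[nhds y] fun z => q z * b z := by
    intro y hy
    filter_upwards [hU.mem_nhds hy] with z hz
    exact (div_mul_cancel₀ (a z) hz).symm
  have rel1 : ∀ y ∈ U, deriv a y = deriv q y * b y + q y * deriv b y := by
    intro y hy
    rw [(evab y hy).deriv_eq, deriv_fun_mul (hqD y hy) (hbD y)]
  have rel2 : ∀ y ∈ U, deriv (deriv a) y
      = deriv (deriv q) y * b y + 2 * deriv q y * deriv b y + q y * deriv (deriv b) y := by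
    intro y hy
    have ev : deriv a =ᶠ[nhds y] fun z => deriv q z * b z + q z * deriv b z := by
      filter_upwards [hU.mem_nhds hy] with z hz
      exact rel1 z hz
    rw [ev.deriv_eq, deriv_fun_add ((hq1D y hy).fun_mul (hbD y)) ((hqD y hy).fun_mul (hb1D y)),
      deriv_fun_mul (hq1D y hy) (hbD y), deriv_fun_mul (hqD y hy) (hb1D y)]
    ring
  have rel3 : deriv (deriv (deriv a)) x
      = deriv (deriv (deriv q)) x * b x + 3 * deriv (deriv q) x * deriv b x
        + 3 * deriv q x * deriv (deriv b) x + q x * deriv (deriv (deriv b)) x := by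
    have ev : deriv (deriv a) =ᶠ[nhds x]
        fun z => deriv (deriv q) z * b z + 2 * deriv q z * deriv b z + q z * deriv (deriv b) z := by
      filter_upwards [hU.mem_nhds hxU] with z hz
      exact rel2 z hz
    rw [ev.deriv_eq, deriv_fun_add (((hq2D x hxU).fun_mul (hbD x)).fun_add
        (((hq1D x hxU).const_mul 2).fun_mul (hb1D x))) ((hqD x hxU).fun_mul (hb2D x)),
      deriv_fun_add ((hq2D x hxU).fun_mul (hbD x)) (((hq1D x hxU).const_mul 2).fun_mul (hb1D x)),
      deriv_fun_mul (hq2D x hxU) (hbD x), deriv_fun_mul ((hq1D x hxU).const_mul 2) (hb1D x),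
      deriv_fun_mul (hqD x hxU) (hb2D x), deriv_const_mul 2 (hq1D x hxU)]
    ring
  -- derivatives of v = q * E
  have relv1 : ∀ y ∈ U, deriv (fun z => q z * E z) y
      = (deriv q y + Complex.I*α*q y) * E y := by
    intro y hy
    rw [deriv_fun_mul (hqD y hy) (hE y).differentiableAt, (hE y).deriv]
    ring
  have relv2 : ∀ y ∈ U, deriv (deriv (fun z => q z * E z)) y
      = (deriv (deriv q) y + 2*(Complex.I*α)*deriv q y + (Complex.I*α)^2*q y) * E y := by
    intro y hy
    have ev : deriv (fun z => q z * E z) =ᶠ[nhds y]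
        fun z => (deriv q z + Complex.I*α*q z) * E z := by
      filter_upwards [hU.mem_nhds hy] with z hz
      exact relv1 z hz
    rw [ev.deriv_eq, deriv_fun_mul ((hq1D y hy).fun_add ((hqD y hy).const_mul _))
        (hE y).differentiableAt,
      deriv_fun_add (hq1D y hy) ((hqD y hy).const_mul _), deriv_const_mul _ (hqD y hy),
      (hE y).deriv]
    ring
  have relv3 : deriv (deriv (deriv (fun z => q z * E z))) x
      = (deriv (deriv (deriv q)) x + 3*(Complex.I*α)*deriv (deriv q) x
          + 3*(Complex.I*α)^2*deriv q x + (Complex.I*α)^3*q x) * E x := by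
    have ev : deriv (deriv (fun z => q z * E z)) =ᶠ[nhds x]
        fun z => (deriv (deriv q) z + 2*(Complex.I*α)*deriv q z + (Complex.I*α)^2*q z) * E z := by
      filter_upwards [hU.mem_nhds hxU] with z hz
      exact relv2 z hz
    have hd1 : DifferentiableAt ℝ
        (fun z => deriv (deriv q) z + 2*(Complex.I*α)*deriv q z + (Complex.I*α)^2*q z) x :=
      ((hq2D x hxU).add ((hq1D x hxU).const_mul _)).add ((hqD x hxU).const_mul _)
    rw [ev.deriv_eq, deriv_fun_mul hd1 (hE x).differentiableAt,
      deriv_fun_add ((hq2D x hxU).fun_add ((hq1D x hxU).const_mul _)) ((hqD x hxU).const_mul _),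
      deriv_fun_add (hq2D x hxU) ((hq1D x hxU).const_mul _),
      deriv_const_mul _ (hq1D x hxU), deriv_const_mul _ (hqD x hxU), (hE x).deriv]
    ring
  refine ⟨deriv q x, deriv (deriv q) x, deriv (deriv (deriv q)) x, ?_, ?_, ?_, ?_, ?_, ?_⟩
  · have := rel1 x hxU; linear_combination this
  · have := rel2 x hxU; linear_combination this
  · linear_combination rel3
  · have := relv1 x hxU
    linear_combination this
  · have := relv2 x hxU
    linear_combination this + ((α:ℂ)^2*(a x / b x)*E x)*Complex.I_sq
  · linear_combination relv3 + ((3*(α:ℂ)^2*(deriv q x) + Complex.I*(α:ℂ)^3*(a x / b x))*E x)*Complex.I_sq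

lemma tKey (a b : ℝ → ℂ) (t : ℝ) (ha : DifferentiableAt ℝ a t) (hb : DifferentiableAt ℝ b t)
    (hb0 : b t ≠ 0) (μ ν : ℝ) :
    ∃ qt : ℂ, deriv a t = qt * b t + (a t / b t) * deriv b t ∧
      deriv (fun s => a s / b s * Complex.exp (Complex.I*μ*s + Complex.I*ν)) t
        = (qt + Complex.I*μ*(a t / b t)) * Complex.exp (Complex.I*μ*t + Complex.I*ν) := by
  refine ⟨(deriv a t * b t - a t * deriv b t)/(b t)^2, by field_simp; ring, ?_⟩
  rw [deriv_fun_mul (ha.fun_div hb hb0) (expderiv t _ _).differentiableAt,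
    deriv_fun_div ha hb hb0, (expderiv t _ _).deriv]
  field_simp

lemma sqAbs_eq' (z : ℂ) : sqAbs z = z * star z := by
  rw [sqAbs, Complex.sq_norm]
  exact (Complex.mul_conj z).symm

lemma star_I' : star Complex.I = -Complex.I := Complex.conj_I

lemma star_ofReal' (r : ℝ) : star ((r : ℝ) : ℂ) = ((r : ℝ) : ℂ) := Complex.conj_ofReal r

lemma star_exp_mul_self (z : ℂ) (h : star z = -z) :
    star (Complex.exp z) * Complex.exp z = 1 := by
  have : star (Complex.exp z) = Complex.exp (star z) := (Complex.exp_conj z).symm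
  rw [this, h, ← Complex.exp_add, neg_add_cancel, Complex.exp_zero]

lemma core (A3 A4 C1 C2 C3 C4 P3 P4 : ℂ)
    (F F1 F2 F3 Ft : ℂ) (hF : F ≠ 0)
    (g1 g11 g12 g13 g1t g2 g21 g22 g23 g2t h3 h31 h32 h33 h3t h4 h41 h42 h43 h4t : ℂ)
    (sg1 sg2 sh3 sh4 S12 X13 X14 X23 X24 X34 : ℂ)
    (u1 u11 u12 u13 u1t u2 u21 u22 u23 u2t u3 u31 u32 u33 u3t u4 u41 u42 u43 u4t : ℂ)
    (E1c E2c E3c E4c : ℂ)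
    (hLg10 : g1 = (u1*F))
    (hLg11 : g11 = (u11*F + u1*F1))
    (hLg12 : g12 = (u12*F + 2*u11*F1 + u1*F2))
    (hLg13 : g13 = (u13*F + 3*u12*F1 + 3*u11*F2 + u1*F3))
    (hLg1t : g1t = (u1t*F + u1*Ft))
    (hLg20 : g2 = (u2*F))
    (hLg21 : g21 = (u21*F + u2*F1))
    (hLg22 : g22 = (u22*F + 2*u21*F1 + u2*F2))
    (hLg23 : g23 = (u23*F + 3*u22*F1 + 3*u21*F2 + u2*F3))
    (hLg2t : g2t = (u2t*F + u2*Ft))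
    (hLh30 : h3 = (u3*F))
    (hLh31 : h31 = (u31*F + u3*F1))
    (hLh32 : h32 = (u32*F + 2*u31*F1 + u3*F2))
    (hLh33 : h33 = (u33*F + 3*u32*F1 + 3*u31*F2 + u3*F3))
    (hLh3t : h3t = (u3t*F + u3*Ft))
    (hLh40 : h4 = (u4*F))
    (hLh41 : h41 = (u41*F + u4*F1))
    (hLh42 : h42 = (u42*F + 2*u41*F1 + u4*F2))
    (hLh43 : h43 = (u43*F + 3*u42*F1 + 3*u41*F2 + u4*F3))
    (hLh4t : h4t = (u4t*F + u4*Ft))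
    (hE1 : ((g13*F - 3*g12*F1 + 3*g11*F2 - g1*F3) - (g1t*F - g1*Ft) - 6*(C3*P3^2 + C4*P4^2)*(g11*F - g1*F1) + 3*Complex.I*(P3^2*C3*A3 + P4^2*C4*A4)*(g1*F)) - (-(3*C2)*S12*sg2 + 3*(P3^2*C3)*X13*sh3 + 3*(P4^2*C4)*X14*sh4) = 0)
    (hE2 : ((g23*F - 3*g22*F1 + 3*g21*F2 - g2*F3) - (g2t*F - g2*Ft) - 6*(C3*P3^2 + C4*P4^2)*(g21*F - g2*F1) + 3*Complex.I*(P3^2*C3*A3 + P4^2*C4*A4)*(g2*F)) - (-(3*C1)*(-S12)*sg1 + 3*(P3^2*C3)*X23*sh3 + 3*(P4^2*C4)*X24*sh4) = 0)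
    (hE3 : ((h33*F - 3*h32*F1 + 3*h31*F2 - h3*F3) - (h3t*F - h3*Ft) + 3*Complex.I*A3*(h32*F - 2*h31*F1 + h3*F2) - 3*(A3^2 + 2*C3*P3^2 + 2*C4*P4^2)*(h31*F - h3*F1) + (-(3*Complex.I)*((C3*P3^2 + C4*P4^2)*A3) + 3*Complex.I*(C3*P3^2*A3 + C4*P4^2*A4))*(h3*F)) - (-(3*C1)*X13*sg1 - 3*C2*X23*sg2 - 3*(C4*P4^2)*X34*sh4) = 0)
    (hE4 : ((h43*F - 3*h42*F1 + 3*h41*F2 - h4*F3) - (h4t*F - h4*Ft) + 3*Complex.I*A4*(h42*F - 2*h41*F1 + h4*F2) - 3*(A4^2 + 2*C4*P4^2 + 2*C3*P3^2)*(h41*F - h4*F1) + (-(3*Complex.I)*((C4*P4^2 + C3*P3^2)*A4) + 3*Complex.I*(C4*P4^2*A4 + C3*P3^2*A3))*(h4*F)) - (-(3*C1)*X14*sg1 - 3*C2*X24*sg2 + 3*(C3*P3^2)*X34*sh3) = 0)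
    (hE5 : ((F2*F - 2*F1*F1 + F*F2) - 2*(C3*P3^2 + C4*P4^2)*(F*F)) + 2*C1*(g1*sg1) + 2*C2*(g2*sg2) + 2*(P3^2*C3)*(h3*sh3) + 2*(P4^2*C4)*(h4*sh4) = 0)
    (hE6 : (g11*g2 - g1*g21) - S12*F = 0)
    (hE7 : ((g11*h3 - g1*h31) - Complex.I*A3*(g1*h3)) - (-(X13)*F) = 0)
    (hE8 : ((g11*h4 - g1*h41) - Complex.I*A4*(g1*h4)) - (-(X14)*F) = 0)
    (hE9 : ((g21*h3 - g2*h31) - Complex.I*A3*(g2*h3)) - (-(X23)*F) = 0)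
    (hE10 : ((g21*h4 - g2*h41) - Complex.I*A4*(g2*h4)) - (-(X24)*F) = 0)
    (hE11 : ((h31*h4 - h3*h41) + Complex.I*(A3-A4)*(h3*h4)) - (X34*F) = 0)
    :
    ((u1t + Complex.I*(-(3*(P3^2*C3*A3 + P4^2*C4*A4)))*u1)*E1c = u13*E1c - 3*((C1*(g1*sg1) + C2*(g2*sg2) + C3*(P3^2*(h3*sh3)) + C4*(P4^2*(h4*sh4)))/F^2)*(u11*E1c) - 3*(u1*E1c)*((C1*sg1*u11 + C2*sg2*u21 + C3*P3^2*sh3*(u31 + Complex.I*A3*u3) + C4*P4^2*sh4*(u41 + Complex.I*A4*u4))/F)) ∧ ((u2t + Complex.I*(-(3*(P3^2*C3*A3 + P4^2*C4*A4)))*u2)*E2c = u23*E2c - 3*((C1*(g1*sg1) + C2*(g2*sg2) + C3*(P3^2*(h3*sh3)) + C4*(P4^2*(h4*sh4)))/F^2)*(u21*E2c) - 3*(u2*E2c)*((C1*sg1*u11 + C2*sg2*u21 + C3*P3^2*sh3*(u31 + Complex.I*A3*u3) + C4*P4^2*sh4*(u41 + Complex.I*A4*u4))/F)) ∧ ((P3*(u3t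 + Complex.I*(-(A3^3 + 3*(C3*P3^2 + C4*P4^2)*A3 + 3*(C3*P3^2*A3 + C4*P4^2*A4)))*u3))*E3c = (P3*(u33 + 3*Complex.I*A3*u32 - 3*A3^2*u31 - Complex.I*A3^3*u3))*E3c - 3*((C1*(g1*sg1) + C2*(g2*sg2) + C3*(P3^2*(h3*sh3)) + C4*(P4^2*(h4*sh4)))/F^2)*((P3*(u31 + Complex.I*A3*u3))*E3c) - 3*(P3*u3*E3c)*((C1*sg1*u11 + C2*sg2*u21 + C3*P3^2*sh3*(u31 + Complex.I*A3*u3) + C4*P4^2*sh4*(u41 + Complex.I*A4*u4))/F)) ∧ ((P4*(u4t + Complex.I*(-(A4^3 + 3*(C3*P3^2 + C4*P4^2)*A4 + 3*(C3*P3^2*A3 + C4*P4^2*A4)))*u4))*E4c = (P4*(u43 + 3*Complex.I*A4*u42 - 3*A4^2*u41 - Complex.I*A4^3*u4))*E4c - 3*((C1*(g1*sg1) + C2*(g2*sg2) + C3*(P3^2*(h3*sh3)) + C4*(P4^2*(h4*sh4)))/F^2)*((P4*(u41 + Complex.I*A4*u4))*E4c) - 3*(P4*u4*E4c)*((C1*sg1*u11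 + C2*sg2*u21 + C3*P3^2*sh3*(u31 + Complex.I*A3*u3) + C4*P4^2*sh4*(u41 + Complex.I*A4*u4))/F)) := by
  subst hLg10
  subst hLg11
  subst hLg12
  subst hLg13
  subst hLg1t
  subst hLg20
  subst hLg21
  subst hLg22
  subst hLg23
  subst hLg2t
  subst hLh30
  subst hLh31
  subst hLh32
  subst hLh33
  subst hLh3t
  subst hLh40
  subst hLh41
  subst hLh42
  subst hLh43
  subst hLh4t
  refine ⟨?_, ?_, ?_, ?_⟩
  · field_simp
    apply mul_left_cancel₀ (pow_ne_zero 2 hF)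
    linear_combination (E1c) * ((-F) * hE1 + (3*u11*F) * hE5 + (-3*C2*sg2) * hE6 + (-3*C3*P3^2*sh3) * hE7 + (-3*C4*P4^2*sh4) * hE8)
  · field_simp
    apply mul_left_cancel₀ (pow_ne_zero 2 hF)
    linear_combination (E2c) * ((-F) * hE2 + (3*u21*F) * hE5 + (3*C1*sg1) * hE6 + (-3*C3*P3^2*sh3) * hE9 + (-3*C4*P4^2*sh4) * hE10)
  · field_simp
    apply mul_left_cancel₀ (pow_ne_zero 2 hF)
    linear_combination (E3c) * ((-F*P3) * hE3 + (3*P3*(u31 + Complex.I*A3*u3)*F) * hE5 + (3*C1*P3*sg1) * hE7 + (3*C2*P3*sg2) * hE9 + (-3*C4*P4^2*P3*sh4) * hE11)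
  · field_simp
    apply mul_left_cancel₀ (pow_ne_zero 2 hF)
    linear_combination (E4c) * ((-F*P4) * hE4 + (3*P4*(u41 + Complex.I*A4*u4)*F) * hE5 + (3*C1*P4*sg1) * hE8 + (3*C2*P4*sg2) * hE10 + (3*C3*P3^2*P4*sh3) * hE11)

set_option maxHeartbeats 2000000 in
theorem stmt3 (ρ₃ ρ₄ α₃ α₄ c₁ c₂ c₃ c₄ : ℝ)
    (f : ℝ → ℝ → ℝ) (g₁ g₂ h₃ h₄ s₁₂ r₁₃ r₁₄ r₂₃ r₂₄ r₃₄ : ℝ → ℝ → ℂ)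
    (hf : ContDiff ℝ (⊤ : ℕ∞) fun q : ℝ × ℝ => f q.1 q.2)
    (hg₁ : ContDiff ℝ (⊤ : ℕ∞) fun q : ℝ × ℝ => g₁ q.1 q.2)
    (hg₂ : ContDiff ℝ (⊤ : ℕ∞) fun q : ℝ × ℝ => g₂ q.1 q.2)
    (hh₃ : ContDiff ℝ (⊤ : ℕ∞) fun q : ℝ × ℝ => h₃ q.1 q.2)
    (hh₄ : ContDiff ℝ (⊤ : ℕ∞) fun q : ℝ × ℝ => h₄ q.1 q.2)
    (hs₁₂ : ContDiff ℝ (⊤ : ℕ∞) fun q : ℝ × ℝ => s₁₂ q.1 q.2)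
    (hr₁₃ : ContDiff ℝ (⊤ : ℕ∞) fun q : ℝ × ℝ => r₁₃ q.1 q.2)
    (hr₁₄ : ContDiff ℝ (⊤ : ℕ∞) fun q : ℝ × ℝ => r₁₄ q.1 q.2)
    (hr₂₃ : ContDiff ℝ (⊤ : ℕ∞) fun q : ℝ × ℝ => r₂₃ q.1 q.2)
    (hr₂₄ : ContDiff ℝ (⊤ : ℕ∞) fun q : ℝ × ℝ => r₂₄ q.1 q.2)
    (hr₃₄ : ContDiff ℝ (⊤ : ℕ∞) fun q : ℝ × ℝ => r₃₄ q.1 q.2)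
    -- (i)
    (heq1 : ∀ x t : ℝ,
      Dx3 g₁ (fun x t => (f x t : ℂ)) x t - Dt1 g₁ (fun x t => (f x t : ℂ)) x t
        - 6 * ((c₃ * ρ₃ ^ 2 + c₄ * ρ₄ ^ 2 : ℝ) : ℂ) * Dx1 g₁ (fun x t => (f x t : ℂ)) x t
        + 3 * Complex.I * ((ρ₃ ^ 2 * c₃ * α₃ + ρ₄ ^ 2 * c₄ * α₄ : ℝ) : ℂ)
            * (g₁ x t * (f x t : ℂ))
      = -(3 * (c₂ : ℂ)) * s₁₂ x t * star (g₂ x t)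
        + 3 * Complex.I * ((ρ₃ ^ 2 * c₃ * α₃ : ℝ) : ℂ) * r₁₃ x t * star (h₃ x t)
        + 3 * Complex.I * ((ρ₄ ^ 2 * c₄ * α₄ : ℝ) : ℂ) * r₁₄ x t * star (h₄ x t))
    -- (ii), with s₂₁ = -s₁₂
    (heq2 : ∀ x t : ℝ,
      Dx3 g₂ (fun x t => (f x t : ℂ)) x t - Dt1 g₂ (fun x t => (f x t : ℂ)) x t
        - 6 * ((c₃ * ρ₃ ^ 2 + c₄ * ρ₄ ^ 2 : ℝ) : ℂ) * Dx1 g₂ (fun x t => (f x t : ℂ)) x t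
        + 3 * Complex.I * ((ρ₃ ^ 2 * c₃ * α₃ + ρ₄ ^ 2 * c₄ * α₄ : ℝ) : ℂ)
            * (g₂ x t * (f x t : ℂ))
      = -(3 * (c₁ : ℂ)) * (-(s₁₂ x t)) * star (g₁ x t)
        + 3 * Complex.I * ((ρ₃ ^ 2 * c₃ * α₃ : ℝ) : ℂ) * r₂₃ x t * star (h₃ x t)
        + 3 * Complex.I * ((ρ₄ ^ 2 * c₄ * α₄ : ℝ) : ℂ) * r₂₄ x t * star (h₄ x t))
    -- (iii)
    (heq3 : ∀ x t : ℝ,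
      Dx3 h₃ (fun x t => (f x t : ℂ)) x t - Dt1 h₃ (fun x t => (f x t : ℂ)) x t
        + 3 * Complex.I * (α₃ : ℂ) * Dx2 h₃ (fun x t => (f x t : ℂ)) x t
        - 3 * ((α₃ ^ 2 + 2 * c₃ * ρ₃ ^ 2 + 2 * c₄ * ρ₄ ^ 2 : ℝ) : ℂ)
            * Dx1 h₃ (fun x t => (f x t : ℂ)) x t
        + (-(3 * Complex.I) * ((( c₃ * ρ₃ ^ 2 + c₄ * ρ₄ ^ 2) * α₃ : ℝ) : ℂ)
            + 3 * Complex.I * ((c₃ * ρ₃ ^ 2 * α₃ + c₄ * ρ₄ ^ 2 * α₄ : ℝ) : ℂ))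
            * (h₃ x t * (f x t : ℂ))
      = -(3 * Complex.I) * ((c₁ * α₃ : ℝ) : ℂ) * r₁₃ x t * star (g₁ x t)
        - 3 * Complex.I * ((c₂ * α₃ : ℝ) : ℂ) * r₂₃ x t * star (g₂ x t)
        - 3 * Complex.I * ((c₄ * (α₃ - α₄) * ρ₄ ^ 2 : ℝ) : ℂ) * r₃₄ x t * star (h₄ x t))
    -- (iv): the analogue of (iii) with the roles of (α₃,ρ₃,c₃,h₃,r₁₃,r₂₃) and
    -- (α₄,ρ₄,c₄,h₄,r₁₄,r₂₄) interchanged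
    (heq4 : ∀ x t : ℝ,
      Dx3 h₄ (fun x t => (f x t : ℂ)) x t - Dt1 h₄ (fun x t => (f x t : ℂ)) x t
        + 3 * Complex.I * (α₄ : ℂ) * Dx2 h₄ (fun x t => (f x t : ℂ)) x t
        - 3 * ((α₄ ^ 2 + 2 * c₄ * ρ₄ ^ 2 + 2 * c₃ * ρ₃ ^ 2 : ℝ) : ℂ)
            * Dx1 h₄ (fun x t => (f x t : ℂ)) x t
        + (-(3 * Complex.I) * (((c₄ * ρ₄ ^ 2 + c₃ * ρ₃ ^ 2) * α₄ : ℝ) : ℂ)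
            + 3 * Complex.I * ((c₄ * ρ₄ ^ 2 * α₄ + c₃ * ρ₃ ^ 2 * α₃ : ℝ) : ℂ))
            * (h₄ x t * (f x t : ℂ))
      = -(3 * Complex.I) * ((c₁ * α₄ : ℝ) : ℂ) * r₁₄ x t * star (g₁ x t)
        - 3 * Complex.I * ((c₂ * α₄ : ℝ) : ℂ) * r₂₄ x t * star (g₂ x t)
        - 3 * Complex.I * ((c₃ * (α₄ - α₃) * ρ₃ ^ 2 : ℝ) : ℂ) * r₃₄ x t * star (h₃ x t))
    -- (v)
    (heq5 : ∀ x t : ℝ,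
      Dx2 (fun x t => (f x t : ℂ)) (fun x t => (f x t : ℂ)) x t
        - 2 * ((c₃ * ρ₃ ^ 2 + c₄ * ρ₄ ^ 2 : ℝ) : ℂ) * ((f x t : ℂ) * (f x t : ℂ))
        + 2 * (c₁ : ℂ) * sqAbs (g₁ x t) + 2 * (c₂ : ℂ) * sqAbs (g₂ x t)
        + 2 * ((ρ₃ ^ 2 * c₃ : ℝ) : ℂ) * sqAbs (h₃ x t)
        + 2 * ((ρ₄ ^ 2 * c₄ : ℝ) : ℂ) * sqAbs (h₄ x t) = 0)
    -- (vi)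
    (heq6 : ∀ x t : ℝ, Dx1 g₁ g₂ x t = s₁₂ x t * (f x t : ℂ))
    -- (vii)
    (heq7 : ∀ x t : ℝ,
      Dx1 g₁ h₃ x t - Complex.I * (α₃ : ℂ) * (g₁ x t * h₃ x t)
        = -(Complex.I * (α₃ : ℂ)) * r₁₃ x t * (f x t : ℂ))
    -- (viii)
    (heq8 : ∀ x t : ℝ,
      Dx1 g₁ h₄ x t - Complex.I * (α₄ : ℂ) * (g₁ x t * h₄ x t)
        = -(Complex.I * (α₄ : ℂ)) * r₁₄ x t * (f x t : ℂ))
    -- (ix)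
    (heq9 : ∀ x t : ℝ,
      Dx1 g₂ h₃ x t - Complex.I * (α₃ : ℂ) * (g₂ x t * h₃ x t)
        = -(Complex.I * (α₃ : ℂ)) * r₂₃ x t * (f x t : ℂ))
    -- (x)
    (heq10 : ∀ x t : ℝ,
      Dx1 g₂ h₄ x t - Complex.I * (α₄ : ℂ) * (g₂ x t * h₄ x t)
        = -(Complex.I * (α₄ : ℂ)) * r₂₄ x t * (f x t : ℂ))
    -- (xi)
    (heq11 : ∀ x t : ℝ,
      Dx1 h₃ h₄ x t + Complex.I * ((α₃ - α₄ : ℝ) : ℂ) * (h₃ x t * h₄ x t)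
        = Complex.I * ((α₃ - α₄ : ℝ) : ℂ) * r₃₄ x t * (f x t : ℂ)) :
    ∀ x t : ℝ, f x t ≠ 0 →
      Hirota4at c₁ c₂ c₃ c₄
        (fun x t => g₁ x t / (f x t : ℂ) *
          Complex.exp (-(Complex.I *
            ((3 * ρ₃ ^ 2 * c₃ * α₃ + 3 * ρ₄ ^ 2 * c₄ * α₄ : ℝ) : ℂ) * (t : ℂ))))
        (fun x t => g₂ x t / (f x t : ℂ) *
          Complex.exp (-(Complex.I *
            ((3 * ρ₃ ^ 2 * c₃ * α₃ + 3 * ρ₄ ^ 2 * c₄ * α₄ : ℝ) : ℂ) * (t : ℂ))))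
        (fun x t => (ρ₃ : ℂ) * (h₃ x t / (f x t : ℂ)) *
          Complex.exp (Complex.I * (((α₃ * x
            - (α₃ ^ 3 + 3 * (c₃ * ρ₃ ^ 2 + c₄ * ρ₄ ^ 2) * α₃
              + 3 * (c₃ * ρ₃ ^ 2 * α₃ + c₄ * ρ₄ ^ 2 * α₄)) * t : ℝ)) : ℂ)))
        (fun x t => (ρ₄ : ℂ) * (h₄ x t / (f x t : ℂ)) *
          Complex.exp (Complex.I * (((α₄ * x
            - (α₄ ^ 3 + 3 * (c₃ * ρ₃ ^ 2 + c₄ * ρ₄ ^ 2) * α₄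
              + 3 * (c₃ * ρ₃ ^ 2 * α₃ + c₄ * ρ₄ ^ 2 * α₄)) * t : ℝ)) : ℂ)))
        x t := by
  intro x t hft0
  have hF : (f x t : ℂ) ≠ 0 := Complex.ofReal_ne_zero.mpr hft0
  have hfX : ContDiff ℝ (⊤:ℕ∞) (fun y => (f y t : ℂ)) :=
    (Complex.ofRealCLM.contDiff.comp (hf.comp (contDiff_id.prodMk contDiff_const))).of_le (by simp)
  have hfT : ContDiff ℝ (⊤:ℕ∞) (fun s => (f x s : ℂ)) :=
    (Complex.ofRealCLM.contDiff.comp (hf.comp (contDiff_const.prodMk contDiff_id))).of_le (by simp)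
  have hXg₁ : ContDiff ℝ (⊤:ℕ∞) (fun y => g₁ y t) := (hg₁.comp (contDiff_id.prodMk contDiff_const)).of_le (by simp)
  have hTg₁ : ContDiff ℝ (⊤:ℕ∞) (fun s => g₁ x s) := (hg₁.comp (contDiff_const.prodMk contDiff_id)).of_le (by simp)
  have hXg₂ : ContDiff ℝ (⊤:ℕ∞) (fun y => g₂ y t) := (hg₂.comp (contDiff_id.prodMk contDiff_const)).of_le (by simp)
  have hTg₂ : ContDiff ℝ (⊤:ℕ∞) (fun s => g₂ x s) := (hg₂.comp (contDiff_const.prodMk contDiff_id)).of_le (by simp)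
  have hXh₃ : ContDiff ℝ (⊤:ℕ∞) (fun y => h₃ y t) := (hh₃.comp (contDiff_id.prodMk contDiff_const)).of_le (by simp)
  have hTh₃ : ContDiff ℝ (⊤:ℕ∞) (fun s => h₃ x s) := (hh₃.comp (contDiff_const.prodMk contDiff_id)).of_le (by simp)
  have hXh₄ : ContDiff ℝ (⊤:ℕ∞) (fun y => h₄ y t) := (hh₄.comp (contDiff_id.prodMk contDiff_const)).of_le (by simp)
  have hTh₄ : ContDiff ℝ (⊤:ℕ∞) (fun s => h₄ x s) := (hh₄.comp (contDiff_const.prodMk contDiff_id)).of_le (by simp)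
  obtain ⟨qa1, qa2, qa3, hLqa1, hLqa2, hLqa3, hDqa1, hDqa2, hDqa3⟩ :=
    xKey (fun y => g₁ y t) (fun y => (f y t : ℂ)) hXg₁ hfX (0:ℝ) (-((3 * ρ₃ ^ 2 * c₃ * α₃ + 3 * ρ₄ ^ 2 * c₄ * α₄) * t)) x hF
  obtain ⟨qat, hLqat, hDqat⟩ :=
    tKey (fun s => g₁ x s) (fun s => (f x s : ℂ)) t ((hTg₁.differentiable (by simp)) t) ((hfT.differentiable (by simp)) t) hF (-(3 * ρ₃ ^ 2 * c₃ * α₃ + 3 * ρ₄ ^ 2 * c₄ * α₄)) (0:ℝ)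
  obtain ⟨qb1, qb2, qb3, hLqb1, hLqb2, hLqb3, hDqb1, hDqb2, hDqb3⟩ :=
    xKey (fun y => g₂ y t) (fun y => (f y t : ℂ)) hXg₂ hfX (0:ℝ) (-((3 * ρ₃ ^ 2 * c₃ * α₃ + 3 * ρ₄ ^ 2 * c₄ * α₄) * t)) x hF
  obtain ⟨qbt, hLqbt, hDqbt⟩ :=
    tKey (fun s => g₂ x s) (fun s => (f x s : ℂ)) t ((hTg₂.differentiable (by simp)) t) ((hfT.differentiable (by simp)) t) hF (-(3 * ρ₃ ^ 2 * c₃ * α₃ + 3 * ρ₄ ^ 2 * c₄ * α₄)) (0:ℝ)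
  obtain ⟨qc1, qc2, qc3, hLqc1, hLqc2, hLqc3, hDqc1, hDqc2, hDqc3⟩ :=
    xKey (fun y => h₃ y t) (fun y => (f y t : ℂ)) hXh₃ hfX α₃ (-((α₃ ^ 3 + 3 * (c₃ * ρ₃ ^ 2 + c₄ * ρ₄ ^ 2) * α₃ + 3 * (c₃ * ρ₃ ^ 2 * α₃ + c₄ * ρ₄ ^ 2 * α₄)) * t)) x hF
  obtain ⟨qct, hLqct, hDqct⟩ :=
    tKey (fun s => h₃ x s) (fun s => (f x s : ℂ)) t ((hTh₃.differentiable (by simp)) t) ((hfT.differentiable (by simp)) t) hF (-(α₃ ^ 3 + 3 * (c₃ * ρ₃ ^ 2 + c₄ * ρ₄ ^ 2) * α₃ + 3 * (c₃ * ρ₃ ^ 2 * α₃ + c₄ * ρ₄ ^ 2 * α₄))) (α₃ * x)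
  obtain ⟨qd1, qd2, qd3, hLqd1, hLqd2, hLqd3, hDqd1, hDqd2, hDqd3⟩ :=
    xKey (fun y => h₄ y t) (fun y => (f y t : ℂ)) hXh₄ hfX α₄ (-((α₄ ^ 3 + 3 * (c₃ * ρ₃ ^ 2 + c₄ * ρ₄ ^ 2) * α₄ + 3 * (c₃ * ρ₃ ^ 2 * α₃ + c₄ * ρ₄ ^ 2 * α₄)) * t)) x hF
  obtain ⟨qdt, hLqdt, hDqdt⟩ :=
    tKey (fun s => h₄ x s) (fun s => (f x s : ℂ)) t ((hTh₄.differentiable (by simp)) t) ((hfT.differentiable (by simp)) t) hF (-(α₄ ^ 3 + 3 * (c₃ * ρ₃ ^ 2 + c₄ * ρ₄ ^ 2) * α₄ + 3 * (c₃ * ρ₃ ^ 2 * α₃ + c₄ * ρ₄ ^ 2 * α₄))) (α₄ * x)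
  have hEq1 : (((deriv (deriv (deriv (fun y => g₁ y t))) x) * ((f x t : ℂ)) - 3 * (deriv (deriv (fun y => g₁ y t)) x) * (deriv (fun y => (f y t : ℂ)) x)  +  3 * (deriv (fun y => g₁ y t) x) * (deriv (deriv (fun y => (f y t : ℂ))) x) - (g₁ x t) * (deriv (deriv (deriv (fun y => (f y t : ℂ)))) x)) - ((deriv (fun s => g₁ x s) t) * ((f x t : ℂ)) - (g₁ x t) * (deriv (fun s => (f x s : ℂ)) t)) - 6 * (((c₃:ℂ)) * ((ρ₃:ℂ)) ^ 2  +  ((c₄:ℂ)) * ((ρ₄:ℂ)) ^ 2) * ((deriv (fun y => g₁ y t) x) * ((f x t : ℂ)) - (g₁ x t) * (deriv (fun y => (f y t : ℂ)) x))  +  3 * (Complex.I) * (((ρ₃:ℂ)) ^ 2 * ((c₃:ℂ)) * ((α₃:ℂ))  +  ((ρ₄:ℂ)) ^ 2 * ((c₄:ℂ)) * ((α₄:ℂ))) * ((g₁ x t) * ((f x t : ℂ)))) - (-(3 * ((c₂:ℂ))) * (s₁₂ x t) * (star (g₂ x t))  +  3 * (((ρ₃:ℂ)) ^ 2 * ((c₃:ℂ)))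 * ((Complex.I  *  (α₃:ℂ)  *  r₁₃ x t)) * (star (h₃ x t))  +  3 * (((ρ₄:ℂ)) ^ 2 * ((c₄:ℂ))) * ((Complex.I  *  (α₄:ℂ)  *  r₁₄ x t)) * (star (h₄ x t))) = 0 := by
    have e := heq1 x t
    simp only [Dx3, Dx2, Dx1, Dt1, pdx, pdt, sqAbs_eq'] at e
    push_cast at e
    linear_combination e
  have hEq2 : (((deriv (deriv (deriv (fun y => g₂ y t))) x) * ((f x t : ℂ)) - 3 * (deriv (deriv (fun y => g₂ y t)) x) * (deriv (fun y => (f y t : ℂ)) x)  +  3 * (deriv (fun y => g₂ y t) x) * (deriv (deriv (fun y => (f y t : ℂ))) x) - (g₂ x t) * (deriv (deriv (deriv (fun y => (f y t : ℂ)))) x)) - ((deriv (fun s => g₂ x s) t) * ((f x t : ℂ)) - (g₂ x t) * (deriv (fun s => (f x s : ℂ)) t)) - 6 * (((c₃:ℂ)) * ((ρ₃:ℂ)) ^ 2  +  ((c₄:ℂ)) * ((ρ₄:ℂ)) ^ 2) * ((deriv (fun y => g₂ y t) x) * ((f x t : ℂ)) - (g₂ x t) * (deriv (fun y => (f y t :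 ℂ)) x))  +  3 * (Complex.I) * (((ρ₃:ℂ)) ^ 2 * ((c₃:ℂ)) * ((α₃:ℂ))  +  ((ρ₄:ℂ)) ^ 2 * ((c₄:ℂ)) * ((α₄:ℂ))) * ((g₂ x t) * ((f x t : ℂ)))) - (-(3 * ((c₁:ℂ))) * (-(s₁₂ x t)) * (star (g₁ x t))  +  3 * (((ρ₃:ℂ)) ^ 2 * ((c₃:ℂ))) * ((Complex.I  *  (α₃:ℂ)  *  r₂₃ x t)) * (star (h₃ x t))  +  3 * (((ρ₄:ℂ)) ^ 2 * ((c₄:ℂ))) * ((Complex.I  *  (α₄:ℂ)  *  r₂₄ x t)) * (star (h₄ x t))) = 0 := by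
    have e := heq2 x t
    simp only [Dx3, Dx2, Dx1, Dt1, pdx, pdt, sqAbs_eq'] at e
    push_cast at e
    linear_combination e
  have hEq3 : (((deriv (deriv (deriv (fun y => h₃ y t))) x) * ((f x t : ℂ)) - 3 * (deriv (deriv (fun y => h₃ y t)) x) * (deriv (fun y => (f y t : ℂ)) x)  +  3 * (deriv (fun y => h₃ y t) x) * (deriv (deriv (fun y => (f y t : ℂ))) x) - (h₃ x t) * (deriv (deriv (deriv (fun y => (f y t : ℂ)))) x)) - ((deriv (fun s => h₃ x s) t) * ((f x t : ℂ)) - (h₃ x t) * (deriv (fun s => (f x s : ℂ)) t))  +  3 * (Complex.I) * ((α₃:ℂ)) * ((deriv (deriv (fun y => h₃ y t)) x) * ((f x t : ℂ)) - 2 * (deriv (fun y => h₃ y t) x) * (deriv (fun y => (f y t : ℂ)) x)  +  (h₃ x t) * (deriv (deriv (fun y => (f y t : ℂ))) x)) - 3 * (((α₃:ℂ)) ^ 2  +  2 * ((c₃:ℂ)) * ((ρ₃:ℂ)) ^ 2  +  2 * ((c₄:ℂ)) * ((ρ₄:ℂ)) ^ 2) * ((deriv (fun y => h₃ y t) x)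 * ((f x t : ℂ)) - (h₃ x t) * (deriv (fun y => (f y t : ℂ)) x))  +  (-(3 * (Complex.I)) * ((((c₃:ℂ)) * ((ρ₃:ℂ)) ^ 2  +  ((c₄:ℂ)) * ((ρ₄:ℂ)) ^ 2) * ((α₃:ℂ)))  +  3 * (Complex.I) * (((c₃:ℂ)) * ((ρ₃:ℂ)) ^ 2 * ((α₃:ℂ))  +  ((c₄:ℂ)) * ((ρ₄:ℂ)) ^ 2 * ((α₄:ℂ)))) * ((h₃ x t) * ((f x t : ℂ)))) - (-(3 * ((c₁:ℂ))) * ((Complex.I  *  (α₃:ℂ)  *  r₁₃ x t)) * (star (g₁ x t)) - 3 * ((c₂:ℂ)) * ((Complex.I  *  (α₃:ℂ)  *  r₂₃ x t)) * (star (g₂ x t)) - 3 * (((c₄:ℂ)) * ((ρ₄:ℂ)) ^ 2) * ((Complex.I  *  ((α₃:ℂ) - (α₄:ℂ))  *  r₃₄ x t)) * (star (h₄ x t))) = 0 := by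
    have e := heq3 x t
    simp only [Dx3, Dx2, Dx1, Dt1, pdx, pdt, sqAbs_eq'] at e
    push_cast at e
    linear_combination e
  have hEq4 : (((deriv (deriv (deriv (fun y => h₄ y t))) x) * ((f x t : ℂ)) - 3 * (deriv (deriv (fun y => h₄ y t)) x) * (deriv (fun y => (f y t : ℂ)) x)  +  3 * (deriv (fun y => h₄ y t) x) * (deriv (deriv (fun y => (f y t : ℂ))) x) - (h₄ x t) * (deriv (deriv (deriv (fun y => (f y t : ℂ)))) x)) - ((deriv (fun s => h₄ x s) t) * ((f x t : ℂ)) - (h₄ x t) * (deriv (fun s => (f x s : ℂ)) t))  +  3 * (Complex.I) * ((α₄:ℂ)) * ((deriv (deriv (fun y => h₄ y t)) x) * ((f x t : ℂ)) - 2 * (deriv (fun y => h₄ y t) x) * (deriv (fun y => (f y t : ℂ)) x)  +  (h₄ x t) * (deriv (deriv (fun y => (f y t : ℂ))) x)) - 3 * (((α₄:ℂ)) ^ 2  +  2 * ((c₄:ℂ)) * ((ρ₄:ℂ)) ^ 2  +  2 * ((c₃:ℂ)) * ((ρ₃:ℂ)) ^ 2) * ((deriv (fun y => h₄ y t) x)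 * ((f x t : ℂ)) - (h₄ x t) * (deriv (fun y => (f y t : ℂ)) x))  +  (-(3 * (Complex.I)) * ((((c₄:ℂ)) * ((ρ₄:ℂ)) ^ 2  +  ((c₃:ℂ)) * ((ρ₃:ℂ)) ^ 2) * ((α₄:ℂ)))  +  3 * (Complex.I) * (((c₄:ℂ)) * ((ρ₄:ℂ)) ^ 2 * ((α₄:ℂ))  +  ((c₃:ℂ)) * ((ρ₃:ℂ)) ^ 2 * ((α₃:ℂ)))) * ((h₄ x t) * ((f x t : ℂ)))) - (-(3 * ((c₁:ℂ))) * ((Complex.I  *  (α₄:ℂ)  *  r₁₄ x t)) * (star (g₁ x t)) - 3 * ((c₂:ℂ)) * ((Complex.I  *  (α₄:ℂ)  *  r₂₄ x t)) * (star (g₂ x t))  +  3 * (((c₃:ℂ)) * ((ρ₃:ℂ)) ^ 2) * ((Complex.I  *  ((α₃:ℂ) - (α₄:ℂ))  *  r₃₄ x t)) * (star (h₃ x t))) = 0 := by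
    have e := heq4 x t
    simp only [Dx3, Dx2, Dx1, Dt1, pdx, pdt, sqAbs_eq'] at e
    push_cast at e
    linear_combination e
  have hEq5 : (((deriv (deriv (fun y => (f y t : ℂ))) x) * ((f x t : ℂ)) - 2 * (deriv (fun y => (f y t : ℂ)) x) * (deriv (fun y => (f y t : ℂ)) x)  +  ((f x t : ℂ)) * (deriv (deriv (fun y => (f y t : ℂ))) x)) - 2 * (((c₃:ℂ)) * ((ρ₃:ℂ)) ^ 2  +  ((c₄:ℂ)) * ((ρ₄:ℂ)) ^ 2) * (((f x t : ℂ)) * ((f x t : ℂ))))  +  2 * ((c₁:ℂ)) * ((g₁ x t) * (star (g₁ x t)))  +  2 * ((c₂:ℂ)) * ((g₂ x t) * (star (g₂ x t)))  +  2 * (((ρ₃:ℂ)) ^ 2 * ((c₃:ℂ))) * ((h₃ x t) * (star (h₃ x t)))  +  2 * (((ρ₄:ℂ)) ^ 2 * ((c₄:ℂ))) * ((h₄ x t) * (star (h₄ x t))) = 0 := by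
    have e := heq5 x t
    simp only [Dx3, Dx2, Dx1, Dt1, pdx, pdt, sqAbs_eq'] at e
    push_cast at e
    linear_combination e
  have hEq6 : ((deriv (fun y => g₁ y t) x) * (g₂ x t) - (g₁ x t) * (deriv (fun y => g₂ y t) x)) - (s₁₂ x t) * ((f x t : ℂ)) = 0 := by
    have e := heq6 x t
    simp only [Dx3, Dx2, Dx1, Dt1, pdx, pdt, sqAbs_eq'] at e
    push_cast at e
    linear_combination e
  have hEq7 : (((deriv (fun y => g₁ y t) x) * (h₃ x t) - (g₁ x t) * (deriv (fun y => h₃ y t) x)) - (Complex.I) * ((α₃:ℂ)) * ((g₁ x t) * (h₃ x t))) - (-(((Complex.I  *  (α₃:ℂ)  *  r₁₃ x t))) * ((f x t : ℂ))) = 0 := by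
    have e := heq7 x t
    simp only [Dx3, Dx2, Dx1, Dt1, pdx, pdt, sqAbs_eq'] at e
    push_cast at e
    linear_combination e
  have hEq8 : (((deriv (fun y => g₁ y t) x) * (h₄ x t) - (g₁ x t) * (deriv (fun y => h₄ y t) x)) - (Complex.I) * ((α₄:ℂ)) * ((g₁ x t) * (h₄ x t))) - (-(((Complex.I  *  (α₄:ℂ)  *  r₁₄ x t))) * ((f x t : ℂ))) = 0 := by
    have e := heq8 x t
    simp only [Dx3, Dx2, Dx1, Dt1, pdx, pdt, sqAbs_eq'] at e
    push_cast at e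
    linear_combination e
  have hEq9 : (((deriv (fun y => g₂ y t) x) * (h₃ x t) - (g₂ x t) * (deriv (fun y => h₃ y t) x)) - (Complex.I) * ((α₃:ℂ)) * ((g₂ x t) * (h₃ x t))) - (-(((Complex.I  *  (α₃:ℂ)  *  r₂₃ x t))) * ((f x t : ℂ))) = 0 := by
    have e := heq9 x t
    simp only [Dx3, Dx2, Dx1, Dt1, pdx, pdt, sqAbs_eq'] at e
    push_cast at e
    linear_combination e
  have hEq10 : (((deriv (fun y => g₂ y t) x) * (h₄ x t) - (g₂ x t) * (deriv (fun y => h₄ y t) x)) - (Complex.I) * ((α₄:ℂ)) * ((g₂ x t) * (h₄ x t))) - (-(((Complex.I  *  (α₄:ℂ)  *  r₂₄ x t))) * ((f x t : ℂ))) = 0 := by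
    have e := heq10 x t
    simp only [Dx3, Dx2, Dx1, Dt1, pdx, pdt, sqAbs_eq'] at e
    push_cast at e
    linear_combination e
  have hEq11 : (((deriv (fun y => h₃ y t) x) * (h₄ x t) - (h₃ x t) * (deriv (fun y => h₄ y t) x))  +  (Complex.I) * (((α₃:ℂ))-((α₄:ℂ))) * ((h₃ x t) * (h₄ x t))) - (((Complex.I  *  ((α₃:ℂ) - (α₄:ℂ))  *  r₃₄ x t)) * ((f x t : ℂ))) = 0 := by
    have e := heq11 x t
    simp only [Dx3, Dx2, Dx1, Dt1, pdx, pdt, sqAbs_eq'] at e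
    push_cast at e
    linear_combination e
  obtain ⟨hT1, hT2, hT3, hT4⟩ :=
    core ((α₃:ℂ))
      ((α₄:ℂ))
      ((c₁:ℂ))
      ((c₂:ℂ))
      ((c₃:ℂ))
      ((c₄:ℂ))
      ((ρ₃:ℂ))
      ((ρ₄:ℂ))
      ((f x t : ℂ))
      (deriv (fun y => (f y t : ℂ)) x)
      (deriv (deriv (fun y => (f y t : ℂ))) x)
      (deriv (deriv (deriv (fun y => (f y t : ℂ)))) x)
      (deriv (fun s => (f x s : ℂ)) t)
      hF
      (g₁ x t)
      (deriv (fun y => g₁ y t) x)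
      (deriv (deriv (fun y => g₁ y t)) x)
      (deriv (deriv (deriv (fun y => g₁ y t))) x)
      (deriv (fun s => g₁ x s) t)
      (g₂ x t)
      (deriv (fun y => g₂ y t) x)
      (deriv (deriv (fun y => g₂ y t)) x)
      (deriv (deriv (deriv (fun y => g₂ y t))) x)
      (deriv (fun s => g₂ x s) t)
      (h₃ x t)
      (deriv (fun y => h₃ y t) x)
      (deriv (deriv (fun y => h₃ y t)) x)
      (deriv (deriv (deriv (fun y => h₃ y t))) x)
      (deriv (fun s => h₃ x s) t)
      (h₄ x t)
      (deriv (fun y => h₄ y t) x)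
      (deriv (deriv (fun y => h₄ y t)) x)
      (deriv (deriv (deriv (fun y => h₄ y t))) x)
      (deriv (fun s => h₄ x s) t)
      (star (g₁ x t))
      (star (g₂ x t))
      (star (h₃ x t))
      (star (h₄ x t))
      (s₁₂ x t)
      ((Complex.I * (α₃:ℂ) * r₁₃ x t))
      ((Complex.I * (α₄:ℂ) * r₁₄ x t))
      ((Complex.I * (α₃:ℂ) * r₂₃ x t))
      ((Complex.I * (α₄:ℂ) * r₂₄ x t))
      ((Complex.I * ((α₃:ℂ) - (α₄:ℂ)) * r₃₄ x t))
      ((g₁ x t / (f x t : ℂ)))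
      (qa1)
      (qa2)
      (qa3)
      (qat)
      ((g₂ x t / (f x t : ℂ)))
      (qb1)
      (qb2)
      (qb3)
      (qbt)
      ((h₃ x t / (f x t : ℂ)))
      (qc1)
      (qc2)
      (qc3)
      (qct)
      ((h₄ x t / (f x t : ℂ)))
      (qd1)
      (qd2)
      (qd3)
      (qdt)
      (Complex.exp (Complex.I * (((0:ℝ) : ℝ) : ℂ) * (x : ℂ) + Complex.I * (((-((3 * ρ₃ ^ 2 * c₃ * α₃ + 3 * ρ₄ ^ 2 * c₄ * α₄) * t)) : ℝ) : ℂ)))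
      (Complex.exp (Complex.I * (((0:ℝ) : ℝ) : ℂ) * (x : ℂ) + Complex.I * (((-((3 * ρ₃ ^ 2 * c₃ * α₃ + 3 * ρ₄ ^ 2 * c₄ * α₄) * t)) : ℝ) : ℂ)))
      (Complex.exp (Complex.I * ((α₃ : ℝ) : ℂ) * (x : ℂ) + Complex.I * (((-((α₃ ^ 3 + 3 * (c₃ * ρ₃ ^ 2 + c₄ * ρ₄ ^ 2) * α₃ + 3 * (c₃ * ρ₃ ^ 2 * α₃ + c₄ * ρ₄ ^ 2 * α₄)) * t)) : ℝ) : ℂ)))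
      (Complex.exp (Complex.I * ((α₄ : ℝ) : ℂ) * (x : ℂ) + Complex.I * (((-((α₄ ^ 3 + 3 * (c₃ * ρ₃ ^ 2 + c₄ * ρ₄ ^ 2) * α₄ + 3 * (c₃ * ρ₃ ^ 2 * α₃ + c₄ * ρ₄ ^ 2 * α₄)) * t)) : ℝ) : ℂ)))
      ((div_mul_cancel₀ (g₁ x t) hF).symm)
      hLqa1
      hLqa2
      hLqa3
      hLqat
      ((div_mul_cancel₀ (g₂ x t) hF).symm)
      hLqb1
      hLqb2
      hLqb3
      hLqbt
      ((div_mul_cancel₀ (h₃ x t) hF).symm)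
      hLqc1
      hLqc2
      hLqc3
      hLqct
      ((div_mul_cancel₀ (h₄ x t) hF).symm)
      hLqd1
      hLqd2
      hLqd3
      hLqdt
      hEq1
      hEq2
      hEq3
      hEq4
      hEq5
      hEq6
      hEq7
      hEq8
      hEq9
      hEq10
      hEq11
  push_cast at hT1 hT2 hT3 hT4
  have hfun1 : (fun y => g₁ y t / (f y t : ℂ) * Complex.exp (-(Complex.I * ((3 * ρ₃ ^ 2 * c₃ * α₃ + 3 * ρ₄ ^ 2 * c₄ * α₄ : ℝ) : ℂ) * (t : ℂ)))) = (fun y => g₁ y t / (f y t : ℂ) * Complex.exp (Complex.I * (((0:ℝ) : ℝ) : ℂ) * (y : ℂ) + Complex.I * (((-((3 * ρ₃ ^ 2 * c₃ * α₃ + 3 * ρ₄ ^ 2 * c₄ * α₄) * t)) : ℝ) : ℂ))) := by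
    funext y
    rw [show -(Complex.I * ((3 * ρ₃ ^ 2 * c₃ * α₃ + 3 * ρ₄ ^ 2 * c₄ * α₄ : ℝ) : ℂ) * (t : ℂ)) = Complex.I * (((0:ℝ) : ℝ) : ℂ) * (y : ℂ) + Complex.I * (((-((3 * ρ₃ ^ 2 * c₃ * α₃ + 3 * ρ₄ ^ 2 * c₄ * α₄) * t)) : ℝ) : ℂ) from by push_cast; ring]
  have hfunt1 : (fun s => g₁ x s / (f x s : ℂ) * Complex.exp (-(Complex.I * ((3 * ρ₃ ^ 2 * c₃ * α₃ + 3 * ρ₄ ^ 2 * c₄ * α₄ : ℝ) : ℂ) * (s : ℂ)))) = (fun s => g₁ x s / (f x s : ℂ) * Complex.exp (Complex.I * (((-(3 * ρ₃ ^ 2 * c₃ * α₃ + 3 * ρ₄ ^ 2 * c₄ * α₄)) : ℝ) : ℂ) * (s : ℂ) + Complex.I * (((0:ℝ) : ℝ) : ℂ))) := by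
    funext s
    rw [show -(Complex.I * ((3 * ρ₃ ^ 2 * c₃ * α₃ + 3 * ρ₄ ^ 2 * c₄ * α₄ : ℝ) : ℂ) * (s : ℂ)) = Complex.I * (((-(3 * ρ₃ ^ 2 * c₃ * α₃ + 3 * ρ₄ ^ 2 * c₄ * α₄)) : ℝ) : ℂ) * (s : ℂ) + Complex.I * (((0:ℝ) : ℝ) : ℂ) from by push_cast; ring]
  have hVv1 : g₁ x t / (f x t : ℂ) * Complex.exp (-(Complex.I * ((3 * ρ₃ ^ 2 * c₃ * α₃ + 3 * ρ₄ ^ 2 * c₄ * α₄ : ℝ) : ℂ) * (t : ℂ))) = (g₁ x t / (f x t : ℂ)) * (Complex.exp (Complex.I * (((0:ℝ) : ℝ) : ℂ) * (x : ℂ) + Complex.I * (((-((3 * ρ₃ ^ 2 * c₃ * α₃ + 3 * ρ₄ ^ 2 * c₄ * α₄) * t)) : ℝ) : ℂ))) := by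
    rw [show -(Complex.I * ((3 * ρ₃ ^ 2 * c₃ * α₃ + 3 * ρ₄ ^ 2 * c₄ * α₄ : ℝ) : ℂ) * (t : ℂ)) = Complex.I * (((0:ℝ) : ℝ) : ℂ) * (x : ℂ) + Complex.I * (((-((3 * ρ₃ ^ 2 * c₃ * α₃ + 3 * ρ₄ ^ 2 * c₄ * α₄) * t)) : ℝ) : ℂ) from by push_cast; ring]
  have hPx1 : pdx (fun x t => g₁ x t / (f x t : ℂ) * Complex.exp (-(Complex.I * ((3 * ρ₃ ^ 2 * c₃ * α₃ + 3 * ρ₄ ^ 2 * c₄ * α₄ : ℝ) : ℂ) * (t : ℂ)))) x t = qa1 * (Complex.exp (Complex.I * (((0:ℝ) : ℝ) : ℂ) * (x : ℂ) + Complex.I * (((-((3 * ρ₃ ^ 2 * c₃ * α₃ + 3 * ρ₄ ^ 2 * c₄ * α₄) * t)) : ℝ) : ℂ))) := by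
    show deriv (fun y => g₁ y t / (f y t : ℂ) * Complex.exp (-(Complex.I * ((3 * ρ₃ ^ 2 * c₃ * α₃ + 3 * ρ₄ ^ 2 * c₄ * α₄ : ℝ) : ℂ) * (t : ℂ)))) x = _
    rw [hfun1, hDqa1]; push_cast; ring
  have hPxxx1 : pdx (pdx (pdx (fun x t => g₁ x t / (f x t : ℂ) * Complex.exp (-(Complex.I * ((3 * ρ₃ ^ 2 * c₃ * α₃ + 3 * ρ₄ ^ 2 * c₄ * α₄ : ℝ) : ℂ) * (t : ℂ)))))) x t = qa3 * (Complex.exp (Complex.I * (((0:ℝ) : ℝ) : ℂ) * (x : ℂ) + Complex.I * (((-((3 * ρ₃ ^ 2 * c₃ * α₃ + 3 * ρ₄ ^ 2 * c₄ * α₄) * t)) : ℝ) : ℂ))) := by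
    show deriv (deriv (deriv (fun y => g₁ y t / (f y t : ℂ) * Complex.exp (-(Complex.I * ((3 * ρ₃ ^ 2 * c₃ * α₃ + 3 * ρ₄ ^ 2 * c₄ * α₄ : ℝ) : ℂ) * (t : ℂ)))))) x = _
    rw [hfun1, hDqa3]; push_cast; ring
  have hPt1 : pdt (fun x t => g₁ x t / (f x t : ℂ) * Complex.exp (-(Complex.I * ((3 * ρ₃ ^ 2 * c₃ * α₃ + 3 * ρ₄ ^ 2 * c₄ * α₄ : ℝ) : ℂ) * (t : ℂ)))) x t = (qat + Complex.I * (((-(3 * ρ₃ ^ 2 * c₃ * α₃ + 3 * ρ₄ ^ 2 * c₄ * α₄)) : ℝ) : ℂ) * (g₁ x t / (f x t : ℂ))) * (Complex.exp (Complex.I * (((0:ℝ) : ℝ) : ℂ) * (x : ℂ) + Complex.I * (((-((3 * ρ₃ ^ 2 * c₃ * α₃ + 3 * ρ₄ ^ 2 * c₄ * α₄) * t)) : ℝ) : ℂ))) := by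
    show deriv (fun s => g₁ x s / (f x s : ℂ) * Complex.exp (-(Complex.I * ((3 * ρ₃ ^ 2 * c₃ * α₃ + 3 * ρ₄ ^ 2 * c₄ * α₄ : ℝ) : ℂ) * (s : ℂ)))) t = _
    rw [hfunt1, hDqat]
    rw [show (Complex.exp (Complex.I * (((-(3 * ρ₃ ^ 2 * c₃ * α₃ + 3 * ρ₄ ^ 2 * c₄ * α₄)) : ℝ) : ℂ) * (t : ℂ) + Complex.I * (((0:ℝ) : ℝ) : ℂ))) = (Complex.exp (Complex.I * (((0:ℝ) : ℝ) : ℂ) * (x : ℂ) + Complex.I * (((-((3 * ρ₃ ^ 2 * c₃ * α₃ + 3 * ρ₄ ^ 2 * c₄ * α₄) * t)) : ℝ) : ℂ))) from by rw [show Complex.I * (((-(3 * ρ₃ ^ 2 * c₃ * α₃ + 3 * ρ₄ ^ 2 * c₄ * α₄)) : ℝ) : ℂ) * (t : ℂ) + Complex.I * (((0:ℝ) : ℝ) : ℂ) = Complex.I * (((0:ℝ) : ℝ) : ℂ) * (x : ℂ) + Complex.I * (((-((3 * ρ₃ ^ 2 * c₃ * α₃ + 3 * ρ₄ ^ 2 *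 c₄ * α₄) * t)) : ℝ) : ℂ) from by push_cast; ring]]
  have hC1 : star (Complex.exp (Complex.I * (((0:ℝ) : ℝ) : ℂ) * (x : ℂ) + Complex.I * (((-((3 * ρ₃ ^ 2 * c₃ * α₃ + 3 * ρ₄ ^ 2 * c₄ * α₄) * t)) : ℝ) : ℂ))) * (Complex.exp (Complex.I * (((0:ℝ) : ℝ) : ℂ) * (x : ℂ) + Complex.I * (((-((3 * ρ₃ ^ 2 * c₃ * α₃ + 3 * ρ₄ ^ 2 * c₄ * α₄) * t)) : ℝ) : ℂ))) = 1 := by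
    refine star_exp_mul_self _ ?_
    simp only [star_add, star_mul', star_I', star_ofReal']
    ring
  have hSv1 : star (g₁ x t / (f x t : ℂ) * Complex.exp (-(Complex.I * ((3 * ρ₃ ^ 2 * c₃ * α₃ + 3 * ρ₄ ^ 2 * c₄ * α₄ : ℝ) : ℂ) * (t : ℂ)))) = star (g₁ x t) / (f x t : ℂ) * star (Complex.exp (Complex.I * (((0:ℝ) : ℝ) : ℂ) * (x : ℂ) + Complex.I * (((-((3 * ρ₃ ^ 2 * c₃ * α₃ + 3 * ρ₄ ^ 2 * c₄ * α₄) * t)) : ℝ) : ℂ))) := by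
    rw [hVv1, star_mul', star_div₀, star_ofReal']
  have hSq1 : sqAbs (g₁ x t / (f x t : ℂ) * Complex.exp (-(Complex.I * ((3 * ρ₃ ^ 2 * c₃ * α₃ + 3 * ρ₄ ^ 2 * c₄ * α₄ : ℝ) : ℂ) * (t : ℂ)))) = (g₁ x t * star (g₁ x t)) / (f x t : ℂ) ^ 2 := by
    rw [hVv1, sqAbs_eq']
    simp only [star_mul', star_div₀, star_ofReal']
    linear_combination ((g₁ x t * star (g₁ x t)) / (f x t : ℂ) ^ 2) * hC1
  have hfun2 : (fun y => g₂ y t / (f y t : ℂ) * Complex.exp (-(Complex.I * ((3 * ρ₃ ^ 2 * c₃ * α₃ + 3 * ρ₄ ^ 2 * c₄ * α₄ : ℝ) : ℂ) * (t : ℂ)))) = (fun y => g₂ y t / (f y t : ℂ) * Complex.exp (Complex.I * (((0:ℝ) : ℝ) : ℂ) * (y : ℂ) + Complex.I * (((-((3 * ρ₃ ^ 2 * c₃ * α₃ + 3 * ρ₄ ^ 2 * c₄ * α₄) * t)) : ℝ) : ℂ))) := by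
    funext y
    rw [show -(Complex.I * ((3 * ρ₃ ^ 2 * c₃ * α₃ + 3 * ρ₄ ^ 2 * c₄ * α₄ : ℝ) : ℂ) * (t : ℂ)) = Complex.I * (((0:ℝ) : ℝ) : ℂ) * (y : ℂ) + Complex.I * (((-((3 * ρ₃ ^ 2 * c₃ * α₃ + 3 * ρ₄ ^ 2 * c₄ * α₄) * t)) : ℝ) : ℂ) from by push_cast; ring]
  have hfunt2 : (fun s => g₂ x s / (f x s : ℂ) * Complex.exp (-(Complex.I * ((3 * ρ₃ ^ 2 * c₃ * α₃ + 3 * ρ₄ ^ 2 * c₄ * α₄ : ℝ) : ℂ) * (s : ℂ)))) = (fun s => g₂ x s / (f x s : ℂ) * Complex.exp (Complex.I * (((-(3 * ρ₃ ^ 2 * c₃ * α₃ + 3 * ρ₄ ^ 2 * c₄ * α₄)) : ℝ) : ℂ) * (s : ℂ) + Complex.I * (((0:ℝ) : ℝ) : ℂ))) := by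
    funext s
    rw [show -(Complex.I * ((3 * ρ₃ ^ 2 * c₃ * α₃ + 3 * ρ₄ ^ 2 * c₄ * α₄ : ℝ) : ℂ) * (s : ℂ)) = Complex.I * (((-(3 * ρ₃ ^ 2 * c₃ * α₃ + 3 * ρ₄ ^ 2 * c₄ * α₄)) : ℝ) : ℂ) * (s : ℂ) + Complex.I * (((0:ℝ) : ℝ) : ℂ) from by push_cast; ring]
  have hVv2 : g₂ x t / (f x t : ℂ) * Complex.exp (-(Complex.I * ((3 * ρ₃ ^ 2 * c₃ * α₃ + 3 * ρ₄ ^ 2 * c₄ * α₄ : ℝ) : ℂ) * (t : ℂ))) = (g₂ x t / (f x t : ℂ)) * (Complex.exp (Complex.I * (((0:ℝ) : ℝ) : ℂ) * (x : ℂ) + Complex.I * (((-((3 * ρ₃ ^ 2 * c₃ * α₃ + 3 * ρ₄ ^ 2 * c₄ * α₄) * t)) : ℝ) : ℂ))) := by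
    rw [show -(Complex.I * ((3 * ρ₃ ^ 2 * c₃ * α₃ + 3 * ρ₄ ^ 2 * c₄ * α₄ : ℝ) : ℂ) * (t : ℂ)) = Complex.I * (((0:ℝ) : ℝ) : ℂ) * (x : ℂ) + Complex.I * (((-((3 * ρ₃ ^ 2 * c₃ * α₃ + 3 * ρ₄ ^ 2 * c₄ * α₄) * t)) : ℝ) : ℂ) from by push_cast; ring]
  have hPx2 : pdx (fun x t => g₂ x t / (f x t : ℂ) * Complex.exp (-(Complex.I * ((3 * ρ₃ ^ 2 * c₃ * α₃ + 3 * ρ₄ ^ 2 * c₄ * α₄ : ℝ) : ℂ) * (t : ℂ)))) x t = qb1 * (Complex.exp (Complex.I * (((0:ℝ) : ℝ) : ℂ) * (x : ℂ) + Complex.I * (((-((3 * ρ₃ ^ 2 * c₃ * α₃ + 3 * ρ₄ ^ 2 * c₄ * α₄) * t)) : ℝ) : ℂ))) := by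
    show deriv (fun y => g₂ y t / (f y t : ℂ) * Complex.exp (-(Complex.I * ((3 * ρ₃ ^ 2 * c₃ * α₃ + 3 * ρ₄ ^ 2 * c₄ * α₄ : ℝ) : ℂ) * (t : ℂ)))) x = _
    rw [hfun2, hDqb1]; push_cast; ring
  have hPxxx2 : pdx (pdx (pdx (fun x t => g₂ x t / (f x t : ℂ) * Complex.exp (-(Complex.I * ((3 * ρ₃ ^ 2 * c₃ * α₃ + 3 * ρ₄ ^ 2 * c₄ * α₄ : ℝ) : ℂ) * (t : ℂ)))))) x t = qb3 * (Complex.exp (Complex.I * (((0:ℝ) : ℝ) : ℂ) * (x : ℂ) + Complex.I * (((-((3 * ρ₃ ^ 2 * c₃ * α₃ + 3 * ρ₄ ^ 2 * c₄ * α₄) * t)) : ℝ) : ℂ))) := by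
    show deriv (deriv (deriv (fun y => g₂ y t / (f y t : ℂ) * Complex.exp (-(Complex.I * ((3 * ρ₃ ^ 2 * c₃ * α₃ + 3 * ρ₄ ^ 2 * c₄ * α₄ : ℝ) : ℂ) * (t : ℂ)))))) x = _
    rw [hfun2, hDqb3]; push_cast; ring
  have hPt2 : pdt (fun x t => g₂ x t / (f x t : ℂ) * Complex.exp (-(Complex.I * ((3 * ρ₃ ^ 2 * c₃ * α₃ + 3 * ρ₄ ^ 2 * c₄ * α₄ : ℝ) : ℂ) * (t : ℂ)))) x t = (qbt + Complex.I * (((-(3 * ρ₃ ^ 2 * c₃ * α₃ + 3 * ρ₄ ^ 2 * c₄ * α₄)) : ℝ) : ℂ) * (g₂ x t / (f x t : ℂ))) * (Complex.exp (Complex.I * (((0:ℝ) : ℝ) : ℂ) * (x : ℂ) + Complex.I * (((-((3 * ρ₃ ^ 2 * c₃ * α₃ + 3 * ρ₄ ^ 2 * c₄ * α₄) * t)) : ℝ) : ℂ))) := by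
    show deriv (fun s => g₂ x s / (f x s : ℂ) * Complex.exp (-(Complex.I * ((3 * ρ₃ ^ 2 * c₃ * α₃ + 3 * ρ₄ ^ 2 * c₄ * α₄ : ℝ) : ℂ) * (s : ℂ)))) t = _
    rw [hfunt2, hDqbt]
    rw [show (Complex.exp (Complex.I * (((-(3 * ρ₃ ^ 2 * c₃ * α₃ + 3 * ρ₄ ^ 2 * c₄ * α₄)) : ℝ) : ℂ) * (t : ℂ) + Complex.I * (((0:ℝ) : ℝ) : ℂ))) = (Complex.exp (Complex.I * (((0:ℝ) : ℝ) : ℂ) * (x : ℂ) + Complex.I * (((-((3 * ρ₃ ^ 2 * c₃ * α₃ + 3 * ρ₄ ^ 2 * c₄ * α₄) * t)) : ℝ) : ℂ))) from by rw [show Complex.I * (((-(3 * ρ₃ ^ 2 * c₃ * α₃ + 3 * ρ₄ ^ 2 * c₄ * α₄)) : ℝ) : ℂ) * (t : ℂ) + Complex.I * (((0:ℝ) : ℝ) : ℂ) = Complex.I * (((0:ℝ) : ℝ) : ℂ) * (x : ℂ) + Complex.I * (((-((3 * ρ₃ ^ 2 * c₃ * α₃ + 3 * ρ₄ ^ 2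 * c₄ * α₄) * t)) : ℝ) : ℂ) from by push_cast; ring]]
  have hC2 : star (Complex.exp (Complex.I * (((0:ℝ) : ℝ) : ℂ) * (x : ℂ) + Complex.I * (((-((3 * ρ₃ ^ 2 * c₃ * α₃ + 3 * ρ₄ ^ 2 * c₄ * α₄) * t)) : ℝ) : ℂ))) * (Complex.exp (Complex.I * (((0:ℝ) : ℝ) : ℂ) * (x : ℂ) + Complex.I * (((-((3 * ρ₃ ^ 2 * c₃ * α₃ + 3 * ρ₄ ^ 2 * c₄ * α₄) * t)) : ℝ) : ℂ))) = 1 := by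
    refine star_exp_mul_self _ ?_
    simp only [star_add, star_mul', star_I', star_ofReal']
    ring
  have hSv2 : star (g₂ x t / (f x t : ℂ) * Complex.exp (-(Complex.I * ((3 * ρ₃ ^ 2 * c₃ * α₃ + 3 * ρ₄ ^ 2 * c₄ * α₄ : ℝ) : ℂ) * (t : ℂ)))) = star (g₂ x t) / (f x t : ℂ) * star (Complex.exp (Complex.I * (((0:ℝ) : ℝ) : ℂ) * (x : ℂ) + Complex.I * (((-((3 * ρ₃ ^ 2 * c₃ * α₃ + 3 * ρ₄ ^ 2 * c₄ * α₄) * t)) : ℝ) : ℂ))) := by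
    rw [hVv2, star_mul', star_div₀, star_ofReal']
  have hSq2 : sqAbs (g₂ x t / (f x t : ℂ) * Complex.exp (-(Complex.I * ((3 * ρ₃ ^ 2 * c₃ * α₃ + 3 * ρ₄ ^ 2 * c₄ * α₄ : ℝ) : ℂ) * (t : ℂ)))) = (g₂ x t * star (g₂ x t)) / (f x t : ℂ) ^ 2 := by
    rw [hVv2, sqAbs_eq']
    simp only [star_mul', star_div₀, star_ofReal']
    linear_combination ((g₂ x t * star (g₂ x t)) / (f x t : ℂ) ^ 2) * hC2
  have hfun3 : (fun y => (ρ₃ : ℂ) * (h₃ y t / (f y t : ℂ)) * Complex.exp (Complex.I * (((α₃ * y - (α₃ ^ 3 + 3 * (c₃ * ρ₃ ^ 2 + c₄ * ρ₄ ^ 2) * α₃ + 3 * (c₃ * ρ₃ ^ 2 * α₃ + c₄ * ρ₄ ^ 2 * α₄)) * t : ℝ)) : ℂ))) = (fun y => (ρ₃ : ℂ) * (h₃ y t / (f y t : ℂ) * Complex.exp (Complex.I * ((α₃ : ℝ) : ℂ) * (y : ℂ) + Complex.I * (((-((α₃ ^ 3 + 3 * (c₃ * ρ₃ ^ 2 +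 c₄ * ρ₄ ^ 2) * α₃ + 3 * (c₃ * ρ₃ ^ 2 * α₃ + c₄ * ρ₄ ^ 2 * α₄)) * t)) : ℝ) : ℂ)))) := by
    funext y
    rw [show Complex.I * (((α₃ * y - (α₃ ^ 3 + 3 * (c₃ * ρ₃ ^ 2 + c₄ * ρ₄ ^ 2) * α₃ + 3 * (c₃ * ρ₃ ^ 2 * α₃ + c₄ * ρ₄ ^ 2 * α₄)) * t : ℝ)) : ℂ) = Complex.I * ((α₃ : ℝ) : ℂ) * (y : ℂ) + Complex.I * (((-((α₃ ^ 3 + 3 * (c₃ * ρ₃ ^ 2 + c₄ * ρ₄ ^ 2) * α₃ + 3 * (c₃ * ρ₃ ^ 2 * α₃ + c₄ * ρ₄ ^ 2 * α₄)) * t)) : ℝ) : ℂ) from by push_cast; ring]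
    ring
  have hfunt3 : (fun s => (ρ₃ : ℂ) * (h₃ x s / (f x s : ℂ)) * Complex.exp (Complex.I * (((α₃ * x - (α₃ ^ 3 + 3 * (c₃ * ρ₃ ^ 2 + c₄ * ρ₄ ^ 2) * α₃ + 3 * (c₃ * ρ₃ ^ 2 * α₃ + c₄ * ρ₄ ^ 2 * α₄)) * s : ℝ)) : ℂ))) = (fun s => (ρ₃ : ℂ) * (h₃ x s / (f x s : ℂ) * Complex.exp (Complex.I * (((-(α₃ ^ 3 + 3 * (c₃ * ρ₃ ^ 2 + c₄ * ρ₄ ^ 2) * α₃ + 3 * (c₃ * ρ₃ ^ 2 * α₃ + c₄ * ρ₄ ^ 2 * α₄))) : ℝ) : ℂ) * (s : ℂ) + Complex.I * (((α₃ * x) : ℝ) : ℂ)))) := by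
    funext s
    rw [show Complex.I * (((α₃ * x - (α₃ ^ 3 + 3 * (c₃ * ρ₃ ^ 2 + c₄ * ρ₄ ^ 2) * α₃ + 3 * (c₃ * ρ₃ ^ 2 * α₃ + c₄ * ρ₄ ^ 2 * α₄)) * s : ℝ)) : ℂ) = Complex.I * (((-(α₃ ^ 3 + 3 * (c₃ * ρ₃ ^ 2 + c₄ * ρ₄ ^ 2) * α₃ + 3 * (c₃ * ρ₃ ^ 2 * α₃ + c₄ * ρ₄ ^ 2 * α₄))) : ℝ) : ℂ) * (s : ℂ) + Complex.I * (((α₃ * x) : ℝ) : ℂ) from by push_cast; ring]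
    ring
  have hVv3 : (ρ₃ : ℂ) * (h₃ x t / (f x t : ℂ)) * Complex.exp (Complex.I * (((α₃ * x - (α₃ ^ 3 + 3 * (c₃ * ρ₃ ^ 2 + c₄ * ρ₄ ^ 2) * α₃ + 3 * (c₃ * ρ₃ ^ 2 * α₃ + c₄ * ρ₄ ^ 2 * α₄)) * t : ℝ)) : ℂ)) = (ρ₃ : ℂ) * (h₃ x t / (f x t : ℂ)) * (Complex.exp (Complex.I * ((α₃ : ℝ) : ℂ) * (x : ℂ) + Complex.I * (((-((α₃ ^ 3 + 3 * (c₃ * ρ₃ ^ 2 + c₄ * ρ₄ ^ 2) * α₃ + 3 * (c₃ * ρ₃ ^ 2 * α₃ + c₄ * ρ₄ ^ 2 * α₄)) * t)) : ℝ) : ℂ))) := by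
    rw [show Complex.I * (((α₃ * x - (α₃ ^ 3 + 3 * (c₃ * ρ₃ ^ 2 + c₄ * ρ₄ ^ 2) * α₃ + 3 * (c₃ * ρ₃ ^ 2 * α₃ + c₄ * ρ₄ ^ 2 * α₄)) * t : ℝ)) : ℂ) = Complex.I * ((α₃ : ℝ) : ℂ) * (x : ℂ) + Complex.I * (((-((α₃ ^ 3 + 3 * (c₃ * ρ₃ ^ 2 + c₄ * ρ₄ ^ 2) * α₃ + 3 * (c₃ * ρ₃ ^ 2 * α₃ + c₄ * ρ₄ ^ 2 * α₄)) * t)) : ℝ) : ℂ) from by push_cast; ring]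
  have hPx3 : pdx (fun x t => (ρ₃ : ℂ) * (h₃ x t / (f x t : ℂ)) * Complex.exp (Complex.I * (((α₃ * x - (α₃ ^ 3 + 3 * (c₃ * ρ₃ ^ 2 + c₄ * ρ₄ ^ 2) * α₃ + 3 * (c₃ * ρ₃ ^ 2 * α₃ + c₄ * ρ₄ ^ 2 * α₄)) * t : ℝ)) : ℂ))) x t = (ρ₃ : ℂ) * ((qc1 + Complex.I * (α₃:ℂ) * (h₃ x t / (f x t : ℂ))) * (Complex.exp (Complex.I * ((α₃ : ℝ) : ℂ) * (x : ℂ) + Complex.I * (((-((α₃ ^ 3 + 3 * (c₃ * ρ₃ ^ 2 + c₄ * ρ₄ ^ 2) * α₃ + 3 * (c₃ * ρ₃ ^ 2 * α₃ + c₄ * ρ₄ ^ 2 * α₄)) * t)) : ℝ) : ℂ)))) := by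
    show deriv (fun y => (ρ₃ : ℂ) * (h₃ y t / (f y t : ℂ)) * Complex.exp (Complex.I * (((α₃ * y - (α₃ ^ 3 + 3 * (c₃ * ρ₃ ^ 2 + c₄ * ρ₄ ^ 2) * α₃ + 3 * (c₃ * ρ₃ ^ 2 * α₃ + c₄ * ρ₄ ^ 2 * α₄)) * t : ℝ)) : ℂ))) x = _
    rw [hfun3, deriv_const_mul_field, hDqc1]
  have hPxxx3 : pdx (pdx (pdx (fun x t => (ρ₃ : ℂ) * (h₃ x t / (f x t : ℂ)) * Complex.exp (Complex.I * (((α₃ * x - (α₃ ^ 3 + 3 * (c₃ * ρ₃ ^ 2 + c₄ * ρ₄ ^ 2) * α₃ + 3 * (c₃ * ρ₃ ^ 2 * α₃ + c₄ * ρ₄ ^ 2 * α₄)) * t : ℝ)) : ℂ))))) x t = (ρ₃ : ℂ) * ((qc3 + 3 * Complex.I * (α₃:ℂ) * qc2 - 3 * (α₃:ℂ) ^ 2 * qc1 - Complex.I * (α₃:ℂ) ^ 3 * (h₃ x t / (f x t : ℂ))) * (Complex.exp (Complex.I * ((α₃ : ℝ) : ℂ) * (x : ℂ) + Complex.I * (((-((α₃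 ^ 3 + 3 * (c₃ * ρ₃ ^ 2 + c₄ * ρ₄ ^ 2) * α₃ + 3 * (c₃ * ρ₃ ^ 2 * α₃ + c₄ * ρ₄ ^ 2 * α₄)) * t)) : ℝ) : ℂ)))) := by
    show deriv (deriv (deriv (fun y => (ρ₃ : ℂ) * (h₃ y t / (f y t : ℂ)) * Complex.exp (Complex.I * (((α₃ * y - (α₃ ^ 3 + 3 * (c₃ * ρ₃ ^ 2 + c₄ * ρ₄ ^ 2) * α₃ + 3 * (c₃ * ρ₃ ^ 2 * α₃ + c₄ * ρ₄ ^ 2 * α₄)) * t : ℝ)) : ℂ))))) x = _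
    rw [hfun3]
    simp only [deriv_const_mul_field', deriv_const_mul_field]
    rw [hDqc3]
  have hPt3 : pdt (fun x t => (ρ₃ : ℂ) * (h₃ x t / (f x t : ℂ)) * Complex.exp (Complex.I * (((α₃ * x - (α₃ ^ 3 + 3 * (c₃ * ρ₃ ^ 2 + c₄ * ρ₄ ^ 2) * α₃ + 3 * (c₃ * ρ₃ ^ 2 * α₃ + c₄ * ρ₄ ^ 2 * α₄)) * t : ℝ)) : ℂ))) x t = (ρ₃ : ℂ) * ((qct + Complex.I * (((-(α₃ ^ 3 + 3 * (c₃ * ρ₃ ^ 2 + c₄ * ρ₄ ^ 2) * α₃ + 3 * (c₃ * ρ₃ ^ 2 * α₃ + c₄ * ρ₄ ^ 2 * α₄))) : ℝ) : ℂ) * (h₃ x t / (f x t : ℂ))) * (Complex.exp (Complex.I * ((α₃ : ℝ) : ℂ) * (x : ℂ) + Complex.I * (((-((α₃ ^ 3 + 3 * (c₃ * ρ₃ ^ 2 + c₄ * ρ₄ ^ 2) * α₃ + 3 * (c₃ * ρ₃ ^ 2 * α₃ + c₄ * ρ₄ ^ 2 * α₄)) * t)) : ℝ) : ℂ)))) :=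 by
    show deriv (fun s => (ρ₃ : ℂ) * (h₃ x s / (f x s : ℂ)) * Complex.exp (Complex.I * (((α₃ * x - (α₃ ^ 3 + 3 * (c₃ * ρ₃ ^ 2 + c₄ * ρ₄ ^ 2) * α₃ + 3 * (c₃ * ρ₃ ^ 2 * α₃ + c₄ * ρ₄ ^ 2 * α₄)) * s : ℝ)) : ℂ))) t = _
    rw [hfunt3, deriv_const_mul_field, hDqct]
    rw [show (Complex.exp (Complex.I * (((-(α₃ ^ 3 + 3 * (c₃ * ρ₃ ^ 2 + c₄ * ρ₄ ^ 2) * α₃ + 3 * (c₃ * ρ₃ ^ 2 * α₃ + c₄ * ρ₄ ^ 2 * α₄))) : ℝ) : ℂ) * (t : ℂ) + Complex.I * (((α₃ * x) : ℝ) : ℂ))) = (Complex.exp (Complex.I * ((α₃ : ℝ) : ℂ) * (x : ℂ) + Complex.I * (((-((α₃ ^ 3 + 3 * (c₃ * ρ₃ ^ 2 + c₄ * ρ₄ ^ 2) * α₃ + 3 * (c₃ * ρ₃ ^ 2 * α₃ + c₄ * ρ₄ ^ 2 * α₄)) * t)) : ℝ) : ℂ))) from by rw [show Complex.I * (((-(α₃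 ^ 3 + 3 * (c₃ * ρ₃ ^ 2 + c₄ * ρ₄ ^ 2) * α₃ + 3 * (c₃ * ρ₃ ^ 2 * α₃ + c₄ * ρ₄ ^ 2 * α₄))) : ℝ) : ℂ) * (t : ℂ) + Complex.I * (((α₃ * x) : ℝ) : ℂ) = Complex.I * ((α₃ : ℝ) : ℂ) * (x : ℂ) + Complex.I * (((-((α₃ ^ 3 + 3 * (c₃ * ρ₃ ^ 2 + c₄ * ρ₄ ^ 2) * α₃ + 3 * (c₃ * ρ₃ ^ 2 * α₃ + c₄ * ρ₄ ^ 2 * α₄)) * t)) : ℝ) : ℂ) from by push_cast; ring]]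
  have hC3 : star (Complex.exp (Complex.I * ((α₃ : ℝ) : ℂ) * (x : ℂ) + Complex.I * (((-((α₃ ^ 3 + 3 * (c₃ * ρ₃ ^ 2 + c₄ * ρ₄ ^ 2) * α₃ + 3 * (c₃ * ρ₃ ^ 2 * α₃ + c₄ * ρ₄ ^ 2 * α₄)) * t)) : ℝ) : ℂ))) * (Complex.exp (Complex.I * ((α₃ : ℝ) : ℂ) * (x : ℂ) + Complex.I * (((-((α₃ ^ 3 + 3 * (c₃ * ρ₃ ^ 2 + c₄ * ρ₄ ^ 2) * α₃ + 3 * (c₃ * ρ₃ ^ 2 * α₃ + c₄ * ρ₄ ^ 2 * α₄)) * t)) : ℝ) : ℂ))) = 1 := by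
    refine star_exp_mul_self _ ?_
    simp only [star_add, star_mul', star_I', star_ofReal']
    ring
  have hSv3 : star ((ρ₃ : ℂ) * (h₃ x t / (f x t : ℂ)) * Complex.exp (Complex.I * (((α₃ * x - (α₃ ^ 3 + 3 * (c₃ * ρ₃ ^ 2 + c₄ * ρ₄ ^ 2) * α₃ + 3 * (c₃ * ρ₃ ^ 2 * α₃ + c₄ * ρ₄ ^ 2 * α₄)) * t : ℝ)) : ℂ))) = (ρ₃ : ℂ) * (star (h₃ x t) / (f x t : ℂ)) * star (Complex.exp (Complex.I * ((α₃ : ℝ) : ℂ) * (x : ℂ) + Complex.I * (((-((α₃ ^ 3 + 3 * (c₃ * ρ₃ ^ 2 + c₄ * ρ₄ ^ 2) * α₃ + 3 * (c₃ * ρ₃ ^ 2 * α₃ + c₄ * ρ₄ ^ 2 * α₄)) * t)) : ℝ) : ℂ))) := by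
    rw [hVv3, star_mul', star_mul', star_div₀, star_ofReal', star_ofReal']
  have hSq3 : sqAbs ((ρ₃ : ℂ) * (h₃ x t / (f x t : ℂ)) * Complex.exp (Complex.I * (((α₃ * x - (α₃ ^ 3 + 3 * (c₃ * ρ₃ ^ 2 + c₄ * ρ₄ ^ 2) * α₃ + 3 * (c₃ * ρ₃ ^ 2 * α₃ + c₄ * ρ₄ ^ 2 * α₄)) * t : ℝ)) : ℂ))) = (ρ₃ : ℂ) ^ 2 * (h₃ x t * star (h₃ x t)) / (f x t : ℂ) ^ 2 := by
    rw [hVv3, sqAbs_eq']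
    simp only [star_mul', star_div₀, star_ofReal']
    linear_combination ((ρ₃ : ℂ) ^ 2 * (h₃ x t * star (h₃ x t)) / (f x t : ℂ) ^ 2) * hC3
  have hfun4 : (fun y => (ρ₄ : ℂ) * (h₄ y t / (f y t : ℂ)) * Complex.exp (Complex.I * (((α₄ * y - (α₄ ^ 3 + 3 * (c₃ * ρ₃ ^ 2 + c₄ * ρ₄ ^ 2) * α₄ + 3 * (c₃ * ρ₃ ^ 2 * α₃ + c₄ * ρ₄ ^ 2 * α₄)) * t : ℝ)) : ℂ))) = (fun y => (ρ₄ : ℂ) * (h₄ y t / (f y t : ℂ) * Complex.exp (Complex.I * ((α₄ : ℝ) : ℂ) * (y : ℂ) + Complex.I * (((-((α₄ ^ 3 + 3 * (c₃ * ρ₃ ^ 2 + c₄ * ρ₄ ^ 2) * α₄ + 3 * (c₃ * ρ₃ ^ 2 * α₃ + c₄ * ρ₄ ^ 2 * α₄)) * t)) : ℝ) : ℂ)))) := by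
    funext y
    rw [show Complex.I * (((α₄ * y - (α₄ ^ 3 + 3 * (c₃ * ρ₃ ^ 2 + c₄ * ρ₄ ^ 2) * α₄ + 3 * (c₃ * ρ₃ ^ 2 * α₃ + c₄ * ρ₄ ^ 2 * α₄)) * t : ℝ)) : ℂ) = Complex.I * ((α₄ : ℝ) : ℂ) * (y : ℂ) + Complex.I * (((-((α₄ ^ 3 + 3 * (c₃ * ρ₃ ^ 2 + c₄ * ρ₄ ^ 2) * α₄ + 3 * (c₃ * ρ₃ ^ 2 * α₃ + c₄ * ρ₄ ^ 2 * α₄)) * t)) : ℝ) : ℂ) from by push_cast; ring]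
    ring
  have hfunt4 : (fun s => (ρ₄ : ℂ) * (h₄ x s / (f x s : ℂ)) * Complex.exp (Complex.I * (((α₄ * x - (α₄ ^ 3 + 3 * (c₃ * ρ₃ ^ 2 + c₄ * ρ₄ ^ 2) * α₄ + 3 * (c₃ * ρ₃ ^ 2 * α₃ + c₄ * ρ₄ ^ 2 * α₄)) * s : ℝ)) : ℂ))) = (fun s => (ρ₄ : ℂ) * (h₄ x s / (f x s : ℂ) * Complex.exp (Complex.I * (((-(α₄ ^ 3 + 3 * (c₃ * ρ₃ ^ 2 + c₄ * ρ₄ ^ 2) * α₄ + 3 * (c₃ * ρ₃ ^ 2 * α₃ + c₄ * ρ₄ ^ 2 * α₄))) : ℝ) : ℂ) * (s : ℂ) + Complex.I * (((α₄ * x) : ℝ) : ℂ)))) := by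
    funext s
    rw [show Complex.I * (((α₄ * x - (α₄ ^ 3 + 3 * (c₃ * ρ₃ ^ 2 + c₄ * ρ₄ ^ 2) * α₄ + 3 * (c₃ * ρ₃ ^ 2 * α₃ + c₄ * ρ₄ ^ 2 * α₄)) * s : ℝ)) : ℂ) = Complex.I * (((-(α₄ ^ 3 + 3 * (c₃ * ρ₃ ^ 2 + c₄ * ρ₄ ^ 2) * α₄ + 3 * (c₃ * ρ₃ ^ 2 * α₃ + c₄ * ρ₄ ^ 2 * α₄))) : ℝ) : ℂ) * (s : ℂ) + Complex.I * (((α₄ * x) : ℝ) : ℂ) from by push_cast; ring]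
    ring
  have hVv4 : (ρ₄ : ℂ) * (h₄ x t / (f x t : ℂ)) * Complex.exp (Complex.I * (((α₄ * x - (α₄ ^ 3 + 3 * (c₃ * ρ₃ ^ 2 + c₄ * ρ₄ ^ 2) * α₄ + 3 * (c₃ * ρ₃ ^ 2 * α₃ + c₄ * ρ₄ ^ 2 * α₄)) * t : ℝ)) : ℂ)) = (ρ₄ : ℂ) * (h₄ x t / (f x t : ℂ)) * (Complex.exp (Complex.I * ((α₄ : ℝ) : ℂ) * (x : ℂ) + Complex.I * (((-((α₄ ^ 3 + 3 * (c₃ * ρ₃ ^ 2 + c₄ * ρ₄ ^ 2) * α₄ + 3 * (c₃ * ρ₃ ^ 2 * α₃ + c₄ * ρ₄ ^ 2 * α₄)) * t)) : ℝ) : ℂ))) := by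
    rw [show Complex.I * (((α₄ * x - (α₄ ^ 3 + 3 * (c₃ * ρ₃ ^ 2 + c₄ * ρ₄ ^ 2) * α₄ + 3 * (c₃ * ρ₃ ^ 2 * α₃ + c₄ * ρ₄ ^ 2 * α₄)) * t : ℝ)) : ℂ) = Complex.I * ((α₄ : ℝ) : ℂ) * (x : ℂ) + Complex.I * (((-((α₄ ^ 3 + 3 * (c₃ * ρ₃ ^ 2 + c₄ * ρ₄ ^ 2) * α₄ + 3 * (c₃ * ρ₃ ^ 2 * α₃ + c₄ * ρ₄ ^ 2 * α₄)) * t)) : ℝ) : ℂ) from by push_cast; ring]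
  have hPx4 : pdx (fun x t => (ρ₄ : ℂ) * (h₄ x t / (f x t : ℂ)) * Complex.exp (Complex.I * (((α₄ * x - (α₄ ^ 3 + 3 * (c₃ * ρ₃ ^ 2 + c₄ * ρ₄ ^ 2) * α₄ + 3 * (c₃ * ρ₃ ^ 2 * α₃ + c₄ * ρ₄ ^ 2 * α₄)) * t : ℝ)) : ℂ))) x t = (ρ₄ : ℂ) * ((qd1 + Complex.I * (α₄:ℂ) * (h₄ x t / (f x t : ℂ))) * (Complex.exp (Complex.I * ((α₄ : ℝ) : ℂ) * (x : ℂ) + Complex.I * (((-((α₄ ^ 3 + 3 * (c₃ * ρ₃ ^ 2 + c₄ * ρ₄ ^ 2) * α₄ + 3 * (c₃ * ρ₃ ^ 2 * α₃ + c₄ * ρ₄ ^ 2 * α₄)) * t)) : ℝ) : ℂ)))) := by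
    show deriv (fun y => (ρ₄ : ℂ) * (h₄ y t / (f y t : ℂ)) * Complex.exp (Complex.I * (((α₄ * y - (α₄ ^ 3 + 3 * (c₃ * ρ₃ ^ 2 + c₄ * ρ₄ ^ 2) * α₄ + 3 * (c₃ * ρ₃ ^ 2 * α₃ + c₄ * ρ₄ ^ 2 * α₄)) * t : ℝ)) : ℂ))) x = _
    rw [hfun4, deriv_const_mul_field, hDqd1]
  have hPxxx4 : pdx (pdx (pdx (fun x t => (ρ₄ : ℂ) * (h₄ x t / (f x t : ℂ)) * Complex.exp (Complex.I * (((α₄ * x - (α₄ ^ 3 + 3 * (c₃ * ρ₃ ^ 2 + c₄ * ρ₄ ^ 2) * α₄ + 3 * (c₃ * ρ₃ ^ 2 * α₃ + c₄ * ρ₄ ^ 2 * α₄)) * t : ℝ)) : ℂ))))) x t = (ρ₄ : ℂ) * ((qd3 + 3 * Complex.I * (α₄:ℂ) * qd2 - 3 * (α₄:ℂ) ^ 2 * qd1 - Complex.I * (α₄:ℂ) ^ 3 * (h₄ x t / (f x t : ℂ))) * (Complex.exp (Complex.I * ((α₄ : ℝ) : ℂ) * (x : ℂ) + Complex.I * (((-((α₄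 ^ 3 + 3 * (c₃ * ρ₃ ^ 2 + c₄ * ρ₄ ^ 2) * α₄ + 3 * (c₃ * ρ₃ ^ 2 * α₃ + c₄ * ρ₄ ^ 2 * α₄)) * t)) : ℝ) : ℂ)))) := by
    show deriv (deriv (deriv (fun y => (ρ₄ : ℂ) * (h₄ y t / (f y t : ℂ)) * Complex.exp (Complex.I * (((α₄ * y - (α₄ ^ 3 + 3 * (c₃ * ρ₃ ^ 2 + c₄ * ρ₄ ^ 2) * α₄ + 3 * (c₃ * ρ₃ ^ 2 * α₃ + c₄ * ρ₄ ^ 2 * α₄)) * t : ℝ)) : ℂ))))) x = _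
    rw [hfun4]
    simp only [deriv_const_mul_field', deriv_const_mul_field]
    rw [hDqd3]
  have hPt4 : pdt (fun x t => (ρ₄ : ℂ) * (h₄ x t / (f x t : ℂ)) * Complex.exp (Complex.I * (((α₄ * x - (α₄ ^ 3 + 3 * (c₃ * ρ₃ ^ 2 + c₄ * ρ₄ ^ 2) * α₄ + 3 * (c₃ * ρ₃ ^ 2 * α₃ + c₄ * ρ₄ ^ 2 * α₄)) * t : ℝ)) : ℂ))) x t = (ρ₄ : ℂ) * ((qdt + Complex.I * (((-(α₄ ^ 3 + 3 * (c₃ * ρ₃ ^ 2 + c₄ * ρ₄ ^ 2) * α₄ + 3 * (c₃ * ρ₃ ^ 2 * α₃ + c₄ * ρ₄ ^ 2 * α₄))) : ℝ) : ℂ) * (h₄ x t / (f x t : ℂ))) * (Complex.exp (Complex.I * ((α₄ : ℝ) : ℂ) * (x : ℂ) + Complex.I * (((-((α₄ ^ 3 + 3 * (c₃ * ρ₃ ^ 2 + c₄ * ρ₄ ^ 2) * α₄ + 3 * (c₃ * ρ₃ ^ 2 * α₃ + c₄ * ρ₄ ^ 2 * α₄)) * t)) : ℝ) : ℂ)))) :=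 by
    show deriv (fun s => (ρ₄ : ℂ) * (h₄ x s / (f x s : ℂ)) * Complex.exp (Complex.I * (((α₄ * x - (α₄ ^ 3 + 3 * (c₃ * ρ₃ ^ 2 + c₄ * ρ₄ ^ 2) * α₄ + 3 * (c₃ * ρ₃ ^ 2 * α₃ + c₄ * ρ₄ ^ 2 * α₄)) * s : ℝ)) : ℂ))) t = _
    rw [hfunt4, deriv_const_mul_field, hDqdt]
    rw [show (Complex.exp (Complex.I * (((-(α₄ ^ 3 + 3 * (c₃ * ρ₃ ^ 2 + c₄ * ρ₄ ^ 2) * α₄ + 3 * (c₃ * ρ₃ ^ 2 * α₃ + c₄ * ρ₄ ^ 2 * α₄))) : ℝ) : ℂ) * (t : ℂ) + Complex.I * (((α₄ * x) : ℝ) : ℂ))) = (Complex.exp (Complex.I * ((α₄ : ℝ) : ℂ) * (x : ℂ) + Complex.I * (((-((α₄ ^ 3 + 3 * (c₃ * ρ₃ ^ 2 + c₄ * ρ₄ ^ 2) * α₄ + 3 * (c₃ * ρ₃ ^ 2 * α₃ + c₄ * ρ₄ ^ 2 * α₄)) * t)) : ℝ) : ℂ))) from by rw [show Complex.I * (((-(α₄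 ^ 3 + 3 * (c₃ * ρ₃ ^ 2 + c₄ * ρ₄ ^ 2) * α₄ + 3 * (c₃ * ρ₃ ^ 2 * α₃ + c₄ * ρ₄ ^ 2 * α₄))) : ℝ) : ℂ) * (t : ℂ) + Complex.I * (((α₄ * x) : ℝ) : ℂ) = Complex.I * ((α₄ : ℝ) : ℂ) * (x : ℂ) + Complex.I * (((-((α₄ ^ 3 + 3 * (c₃ * ρ₃ ^ 2 + c₄ * ρ₄ ^ 2) * α₄ + 3 * (c₃ * ρ₃ ^ 2 * α₃ + c₄ * ρ₄ ^ 2 * α₄)) * t)) : ℝ) : ℂ) from by push_cast; ring]]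
  have hC4 : star (Complex.exp (Complex.I * ((α₄ : ℝ) : ℂ) * (x : ℂ) + Complex.I * (((-((α₄ ^ 3 + 3 * (c₃ * ρ₃ ^ 2 + c₄ * ρ₄ ^ 2) * α₄ + 3 * (c₃ * ρ₃ ^ 2 * α₃ + c₄ * ρ₄ ^ 2 * α₄)) * t)) : ℝ) : ℂ))) * (Complex.exp (Complex.I * ((α₄ : ℝ) : ℂ) * (x : ℂ) + Complex.I * (((-((α₄ ^ 3 + 3 * (c₃ * ρ₃ ^ 2 + c₄ * ρ₄ ^ 2) * α₄ + 3 * (c₃ * ρ₃ ^ 2 * α₃ + c₄ * ρ₄ ^ 2 * α₄)) * t)) : ℝ) : ℂ))) = 1 := by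
    refine star_exp_mul_self _ ?_
    simp only [star_add, star_mul', star_I', star_ofReal']
    ring
  have hSv4 : star ((ρ₄ : ℂ) * (h₄ x t / (f x t : ℂ)) * Complex.exp (Complex.I * (((α₄ * x - (α₄ ^ 3 + 3 * (c₃ * ρ₃ ^ 2 + c₄ * ρ₄ ^ 2) * α₄ + 3 * (c₃ * ρ₃ ^ 2 * α₃ + c₄ * ρ₄ ^ 2 * α₄)) * t : ℝ)) : ℂ))) = (ρ₄ : ℂ) * (star (h₄ x t) / (f x t : ℂ)) * star (Complex.exp (Complex.I * ((α₄ : ℝ) : ℂ) * (x : ℂ) + Complex.I * (((-((α₄ ^ 3 + 3 * (c₃ * ρ₃ ^ 2 + c₄ * ρ₄ ^ 2) * α₄ + 3 * (c₃ * ρ₃ ^ 2 * α₃ + c₄ * ρ₄ ^ 2 * α₄)) * t)) : ℝ) : ℂ))) := by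
    rw [hVv4, star_mul', star_mul', star_div₀, star_ofReal', star_ofReal']
  have hSq4 : sqAbs ((ρ₄ : ℂ) * (h₄ x t / (f x t : ℂ)) * Complex.exp (Complex.I * (((α₄ * x - (α₄ ^ 3 + 3 * (c₃ * ρ₃ ^ 2 + c₄ * ρ₄ ^ 2) * α₄ + 3 * (c₃ * ρ₃ ^ 2 * α₃ + c₄ * ρ₄ ^ 2 * α₄)) * t : ℝ)) : ℂ))) = (ρ₄ : ℂ) ^ 2 * (h₄ x t * star (h₄ x t)) / (f x t : ℂ) ^ 2 := by
    rw [hVv4, sqAbs_eq']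
    simp only [star_mul', star_div₀, star_ofReal']
    linear_combination ((ρ₄ : ℂ) ^ 2 * (h₄ x t * star (h₄ x t)) / (f x t : ℂ) ^ 2) * hC4
  have hM : (c₁ : ℂ) * star (g₁ x t / (f x t : ℂ) * Complex.exp (-(Complex.I * ((3 * ρ₃ ^ 2 * c₃ * α₃ + 3 * ρ₄ ^ 2 * c₄ * α₄ : ℝ) : ℂ) * (t : ℂ)))) * pdx (fun x t => g₁ x t / (f x t : ℂ) * Complex.exp (-(Complex.I * ((3 * ρ₃ ^ 2 * c₃ * α₃ + 3 * ρ₄ ^ 2 * c₄ * α₄ : ℝ) : ℂ) * (t : ℂ)))) x t + (c₂ : ℂ) * star (g₂ x t / (f x t : ℂ) * Complex.exp (-(Complex.I * ((3 * ρ₃ ^ 2 * c₃ * α₃ + 3 * ρ₄ ^ 2 * c₄ * α₄ : ℝ) : ℂ) * (t : ℂ)))) * pdx (fun x t => g₂ x t / (f x t : ℂ) * Complex.exp (-(Complex.I * ((3 * ρ₃ ^ 2 * c₃ * α₃ + 3 * ρ₄ ^ 2 * c₄ * α₄ : ℝ) : ℂ) * (t : ℂ)))) x t + (c₃ : ℂ)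 * star ((ρ₃ : ℂ) * (h₃ x t / (f x t : ℂ)) * Complex.exp (Complex.I * (((α₃ * x - (α₃ ^ 3 + 3 * (c₃ * ρ₃ ^ 2 + c₄ * ρ₄ ^ 2) * α₃ + 3 * (c₃ * ρ₃ ^ 2 * α₃ + c₄ * ρ₄ ^ 2 * α₄)) * t : ℝ)) : ℂ))) * pdx (fun x t => (ρ₃ : ℂ) * (h₃ x t / (f x t : ℂ)) * Complex.exp (Complex.I * (((α₃ * x - (α₃ ^ 3 + 3 * (c₃ * ρ₃ ^ 2 + c₄ * ρ₄ ^ 2) * α₃ + 3 * (c₃ * ρ₃ ^ 2 * α₃ + c₄ * ρ₄ ^ 2 * α₄)) * t : ℝ)) : ℂ))) x t + (c₄ : ℂ) * star ((ρ₄ : ℂ) * (h₄ x t / (f x t : ℂ)) * Complex.exp (Complex.I * (((α₄ * x - (α₄ ^ 3 + 3 * (c₃ * ρ₃ ^ 2 + c₄ * ρ₄ ^ 2) * α₄ + 3 * (c₃ * ρ₃ ^ 2 * α₃ + c₄ * ρ₄ ^ 2 * α₄)) * t : ℝ)) : ℂ))) * pdx (fun x t => (ρ₄ : ℂ) * (h₄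 x t / (f x t : ℂ)) * Complex.exp (Complex.I * (((α₄ * x - (α₄ ^ 3 + 3 * (c₃ * ρ₃ ^ 2 + c₄ * ρ₄ ^ 2) * α₄ + 3 * (c₃ * ρ₃ ^ 2 * α₃ + c₄ * ρ₄ ^ 2 * α₄)) * t : ℝ)) : ℂ))) x t = ((c₁ : ℂ) * star (g₁ x t) * qa1 + (c₂ : ℂ) * star (g₂ x t) * qb1 + (c₃ : ℂ) * (ρ₃ : ℂ) ^ 2 * star (h₃ x t) * (qc1 + Complex.I * (α₃:ℂ) * (h₃ x t / (f x t : ℂ))) + (c₄ : ℂ) * (ρ₄ : ℂ) ^ 2 * star (h₄ x t) * (qd1 + Complex.I * (α₄:ℂ) * (h₄ x t / (f x t : ℂ)))) / (f x t : ℂ) := by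
    rw [hSv1, hSv2, hSv3, hSv4, hPx1, hPx2, hPx3, hPx4]
    linear_combination ((c₁ : ℂ) * (star (g₁ x t) / (f x t : ℂ)) * qa1) * hC1 + ((c₂ : ℂ) * (star (g₂ x t) / (f x t : ℂ)) * qb1) * hC2 + ((c₃ : ℂ) * (ρ₃ : ℂ) ^ 2 * (star (h₃ x t) / (f x t : ℂ)) * (qc1 + Complex.I * (α₃:ℂ) * (h₃ x t / (f x t : ℂ)))) * hC3 + ((c₄ : ℂ) * (ρ₄ : ℂ) ^ 2 * (star (h₄ x t) / (f x t : ℂ)) * (qd1 + Complex.I * (α₄:ℂ) * (h₄ x t / (f x t : ℂ)))) * hC4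
  unfold Hirota4at
  intro v hv
  simp only [List.mem_cons, List.not_mem_nil, or_false] at hv
  rcases hv with rfl | rfl | rfl | rfl
  · beta_reduce
    rw [hPt1, hPxxx1, hSq1, hSq2, hSq3, hSq4, hM, hPx1, hVv1]
    push_cast
    linear_combination hT1
  · beta_reduce
    rw [hPt2, hPxxx2, hSq1, hSq2, hSq3, hSq4, hM, hPx2, hVv2]
    push_cast
    linear_combination hT2
  · beta_reduce
    rw [hPt3, hPxxx3, hSq1, hSq2, hSq3, hSq4, hM, hPx3, hVv3]
    push_cast
    linear_combination hT3
  · beta_reduce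
    rw [hPt4, hPxxx4, hSq1, hSq2, hSq3, hSq4, hM, hPx4, hVv4]
    push_cast
    linear_combination hT4

end
end

section
/- Let a, b, d₁₁ be real with a > 0, b > 0, d₁₁ > 0, and suppose a² > 3b². Define y₁ = −(2a/b)√(a² + b²)·d₁₁, y₂ = (2a/b)√(a² + b²)·d₁₁, y₃ = 2(a(a² − b²) − a²√(a² − 3b²))d₁₁/b², y₄ = 2(a(a² − b²) + a²√(a² − 3b²))d₁₁/b². Then y₁ < 0 and 0 < y₃ < y₂ < y₄. -/
theorem stmt14 (a b d₁₁ : ℝ) (ha : 0 < a) (hb : 0 < b) (hd : 0 < d₁₁)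
    (hab : a ^ 2 > 3 * b ^ 2) :
    let y₁ := -(2 * a / b) * Real.sqrt (a ^ 2 + b ^ 2) * d₁₁
    let y₂ := (2 * a / b) * Real.sqrt (a ^ 2 + b ^ 2) * d₁₁
    let y₃ := 2 * (a * (a ^ 2 - b ^ 2) - a ^ 2 * Real.sqrt (a ^ 2 - 3 * b ^ 2)) * d₁₁ / b ^ 2
    let y₄ := 2 * (a * (a ^ 2 - b ^ 2) + a ^ 2 * Real.sqrt (a ^ 2 - 3 * b ^ 2)) * d₁₁ / b ^ 2
    y₁ < 0 ∧ 0 < y₃ ∧ y₃ < y₂ ∧ y₂ < y₄ := by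
  intro y₁ y₂ y₃ y₄
  set s := Real.sqrt (a ^ 2 + b ^ 2) with hs_def
  set t := Real.sqrt (a ^ 2 - 3 * b ^ 2) with ht_def
  have hs2 : s ^ 2 = a ^ 2 + b ^ 2 := Real.sq_sqrt (by positivity)
  have hs0 : 0 < s := Real.sqrt_pos.mpr (by positivity)
  have ht2 : t ^ 2 = a ^ 2 - 3 * b ^ 2 := Real.sq_sqrt (by linarith)
  have ht0 : 0 ≤ t := Real.sqrt_nonneg _
  have hb2 : (0:ℝ) < b ^ 2 := by positivity
  have key : b * s < a ^ 2 - b ^ 2 + a * t := by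
    nlinarith [sq_nonneg (b * s - (a ^ 2 - b ^ 2)), mul_pos ha hb, mul_nonneg ha.le ht0,
      sq_nonneg (a - b), mul_pos (mul_pos ha hb) hs0, sq_nonneg (a * t)]
  have hprod : (a ^ 2 - b ^ 2 - a * t) * (a ^ 2 - b ^ 2 + a * t) = b ^ 2 * (a ^ 2 + b ^ 2) := by
    linear_combination (-a ^ 2) * ht2
  have hpos : 0 < a ^ 2 - b ^ 2 + a * t := by nlinarith [mul_nonneg ha.le ht0]
  have h3a : 0 < a ^ 2 - b ^ 2 - a * t := by
    nlinarith [hprod, hpos, mul_pos hb2 (show (0:ℝ) < a ^ 2 + b ^ 2 by positivity)]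
  have h3 : a * (a ^ 2 - b ^ 2) - a ^ 2 * t > 0 := by nlinarith [mul_pos ha h3a]
  have h32b : a ^ 2 - b ^ 2 - a * t < b * s := by
    have h1 := mul_lt_mul_of_pos_left key h3a
    have h2 : 0 < b * s := mul_pos hb hs0
    nlinarith [h1, h2, hprod, hs2]
  have h32 : a * (a ^ 2 - b ^ 2) - a ^ 2 * t < a * b * s := by
    nlinarith [mul_lt_mul_of_pos_left h32b ha]
  refine ⟨?_, ?_, ?_, ?_⟩
  · show -(2 * a / b) * s * d₁₁ < 0
    have : 0 < 2 * a / b := by positivity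
    nlinarith [mul_pos (mul_pos this hs0) hd]
  · show 0 < 2 * (a * (a ^ 2 - b ^ 2) - a ^ 2 * t) * d₁₁ / b ^ 2
    positivity
  · show 2 * (a * (a ^ 2 - b ^ 2) - a ^ 2 * t) * d₁₁ / b ^ 2 < (2 * a / b) * s * d₁₁
    rw [div_lt_iff₀ hb2]
    have : (2 * a / b) * s * d₁₁ * b ^ 2 = 2 * (a * b * s) * d₁₁ := by
      field_simp
    rw [this]
    linarith [mul_lt_mul_of_pos_right h32 hd]
  · show (2 * a / b) * s * d₁₁ < 2 * (a * (a ^ 2 - b ^ 2) + a ^ 2 * t) * d₁₁ / b ^ 2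
    rw [lt_div_iff₀ hb2]
    have : (2 * a / b) * s * d₁₁ * b ^ 2 = 2 * (a * b * s) * d₁₁ := by
      field_simp
    rw [this]
    have key' : a * b * s < a * (a ^ 2 - b ^ 2) + a ^ 2 * t := by
      nlinarith [mul_lt_mul_of_pos_left key ha]
    linarith [mul_lt_mul_of_pos_right key' hd]
end

section
/- Let a, b, d₁₁, ρ, α, C₁ be real with a > 0, b > 0, d₁₁ > 0, ρ > 0, α ≠ 0, C₁ ≠ 0, and suppose a² > 3b². Set y₂ = (2a/b)√(a² + b²)·d₁₁ and define F₁(y) = 4a²C₁²y(a² + b²)(4ad₁₁(ad₁₁(a² + b²) + b²y) + b²y²)/((4ad₁₁(a² + b²)(ad₁₁ + y) + b²y²)²) and F₂ = (ρ²/(d₁₁(a² + (b − α)²)(a² + (α + b)²)))·(−4b(a² + α² + b²)·d₁₁√(a² + b²) + d₁₁(a⁴ + α⁴ + 2α²(a² + b²) + 6a²b² + 5b⁴)), where F₂ = |u₂(y₂)|². Then the following inequalities hold: 0 < F₁(y₂) < C₁²(a² + b²)/(4ad₁₁), and ρ² > F₂ > ρ²α²(a² + α² − 3b²)/(α⁴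 + (a² + b²)² + 2α²(a² − b²)). -/
lemma key1 (a b d C s y : ℝ) (ha : 0 < a) (hb : 0 < b) (hd : 0 < d) (hs0 : 0 < s)
    (hs : s ^ 2 = a ^ 2 + b ^ 2) (hy : y = 2 * a / b * s * d) :
    4 * a ^ 2 * C ^ 2 * y * (a ^ 2 + b ^ 2) *
        (4 * a * d * (a * d * (a ^ 2 + b ^ 2) + b ^ 2 * y) + b ^ 2 * y ^ 2) /
      (4 * a * d * (a ^ 2 + b ^ 2) * (a * d + y) + b ^ 2 * y ^ 2) ^ 2
      = a * b * C ^ 2 / (d * (s + b)) := by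
  subst hy
  rw [← hs]
  have hD : 4 * a * d * s ^ 2 * (a * d + 2 * a / b * s * d) + b ^ 2 * (2 * a / b * s * d) ^ 2
      = 8 * a ^ 2 * d ^ 2 * s ^ 2 * (s + b) / b := by
    field_simp
    ring
  rw [hD]
  have h1 : (8 : ℝ) * a ^ 2 * d ^ 2 * s ^ 2 * (s + b) / b ≠ 0 := by positivity
  have h2 : d * (s + b) ≠ 0 := by positivity
  have hb' : b ≠ 0 := hb.ne'
  field_simp
  ring

lemma key2 (a b α d ρ s : ℝ) (ha : 0 < a) (hb : 0 < b) (hd : 0 < d) (hs0 : 0 < s)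
    (hs : s ^ 2 = a ^ 2 + b ^ 2) :
    ρ ^ 2 / (d * (a ^ 2 + (b - α) ^ 2) * (a ^ 2 + (α + b) ^ 2)) *
        (-(4 * b * (a ^ 2 + α ^ 2 + b ^ 2)) * d * s +
          d * (a ^ 4 + α ^ 4 + 2 * α ^ 2 * (a ^ 2 + b ^ 2) + 6 * a ^ 2 * b ^ 2 + 5 * b ^ 4))
      = ρ ^ 2 * ((a ^ 2 + b ^ 2 + α ^ 2) - 2 * b * s) ^ 2 /
          ((a ^ 2 + (b - α) ^ 2) * (a ^ 2 + (α + b) ^ 2)) := by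
  have hE : -(4 * b * (a ^ 2 + α ^ 2 + b ^ 2)) * d * s +
      d * (a ^ 4 + α ^ 4 + 2 * α ^ 2 * (a ^ 2 + b ^ 2) + 6 * a ^ 2 * b ^ 2 + 5 * b ^ 4)
      = d * ((a ^ 2 + b ^ 2 + α ^ 2) - 2 * b * s) ^ 2 := by
    linear_combination (-4 * b ^ 2 * d) * hs
  rw [hE]
  have hP1 : (0:ℝ) < a ^ 2 + (b - α) ^ 2 :=
    add_pos_of_pos_of_nonneg (pow_pos ha 2) (sq_nonneg _)
  have hP2 : (0:ℝ) < a ^ 2 + (α + b) ^ 2 :=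
    add_pos_of_pos_of_nonneg (pow_pos ha 2) (sq_nonneg _)
  have h1 : d * (a ^ 2 + (b - α) ^ 2) * (a ^ 2 + (α + b) ^ 2) ≠ 0 := by positivity
  have h2 : (a ^ 2 + (b - α) ^ 2) * (a ^ 2 + (α + b) ^ 2) ≠ 0 := by positivity
  field_simp

theorem stmt15 (a b d₁₁ ρ α C₁ : ℝ) (ha : 0 < a) (hb : 0 < b) (hd : 0 < d₁₁)
    (hρ : 0 < ρ) (hα : α ≠ 0) (hC : C₁ ≠ 0) (hab : a ^ 2 > 3 * b ^ 2) :
    let y₂ := (2 * a / b) * Real.sqrt (a ^ 2 + b ^ 2) * d₁₁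
    let F₁ : ℝ → ℝ := fun y =>
      4 * a ^ 2 * C₁ ^ 2 * y * (a ^ 2 + b ^ 2) *
          (4 * a * d₁₁ * (a * d₁₁ * (a ^ 2 + b ^ 2) + b ^ 2 * y) + b ^ 2 * y ^ 2) /
        (4 * a * d₁₁ * (a ^ 2 + b ^ 2) * (a * d₁₁ + y) + b ^ 2 * y ^ 2) ^ 2
    let F₂ : ℝ :=
      ρ ^ 2 / (d₁₁ * (a ^ 2 + (b - α) ^ 2) * (a ^ 2 + (α + b) ^ 2)) *
        (-(4 * b * (a ^ 2 + α ^ 2 + b ^ 2)) * d₁₁ * Real.sqrt (a ^ 2 + b ^ 2) +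
          d₁₁ * (a ^ 4 + α ^ 4 + 2 * α ^ 2 * (a ^ 2 + b ^ 2) + 6 * a ^ 2 * b ^ 2 + 5 * b ^ 4))
    (0 < F₁ y₂ ∧ F₁ y₂ < C₁ ^ 2 * (a ^ 2 + b ^ 2) / (4 * a * d₁₁)) ∧
    (ρ ^ 2 > F₂ ∧ F₂ > ρ ^ 2 * α ^ 2 * (a ^ 2 + α ^ 2 - 3 * b ^ 2) /
        (α ^ 4 + (a ^ 2 + b ^ 2) ^ 2 + 2 * α ^ 2 * (a ^ 2 - b ^ 2))) := by
  intro y₂ F₁ F₂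
  set s := Real.sqrt (a ^ 2 + b ^ 2) with hsdef
  have hs : s ^ 2 = a ^ 2 + b ^ 2 := Real.sq_sqrt (by positivity)
  have hs0 : 0 < s := Real.sqrt_pos.mpr (by positivity)
  have hsb : b < s := by nlinarith
  have hs2b : 2 * b < s := by nlinarith
  have hC2 : 0 < C₁ ^ 2 := pow_two_pos_of_ne_zero hC
  have hρ2 : 0 < ρ ^ 2 := pow_pos hρ 2
  have hα2 : 0 < α ^ 2 := pow_two_pos_of_ne_zero hα
  have hF1 : F₁ y₂ = a * b * C₁ ^ 2 / (d₁₁ * (s + b)) := by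
    simp only [F₁, y₂]
    exact key1 a b d₁₁ C₁ s _ ha hb hd hs0 hs (by ring)
  have hF2 : F₂ = ρ ^ 2 * ((a ^ 2 + b ^ 2 + α ^ 2) - 2 * b * s) ^ 2 /
      ((a ^ 2 + (b - α) ^ 2) * (a ^ 2 + (α + b) ^ 2)) := by
    simp only [F₂]
    exact key2 a b α d₁₁ ρ s ha hb hd hs0 hs
  have hP1 : (0:ℝ) < a ^ 2 + (b - α) ^ 2 :=
    add_pos_of_pos_of_nonneg (pow_pos ha 2) (sq_nonneg _)
  have hP2 : (0:ℝ) < a ^ 2 + (α + b) ^ 2 :=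
    add_pos_of_pos_of_nonneg (pow_pos ha 2) (sq_nonneg _)
  refine ⟨⟨?_, ?_⟩, ?_, ?_⟩
  · rw [hF1]
    positivity
  · rw [hF1, div_lt_div_iff₀ (by positivity) (by positivity)]
    have hid1 : (a ^ 2 + b ^ 2) * (s + b) - 4 * a ^ 2 * b = (s + b) * (s - 2 * b) ^ 2 := by
      linear_combination (3 * b - s) * hs
    have hp : 0 < (s + b) * (s - 2 * b) ^ 2 :=
      mul_pos (by linarith) (pow_pos (by linarith) 2)
    nlinarith [hid1, mul_pos (mul_pos hC2 hd) hp]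
  · rw [hF2, gt_iff_lt, div_lt_iff₀ (mul_pos hP1 hP2)]
    have hid2 : (a ^ 2 + (b - α) ^ 2) * (a ^ 2 + (α + b) ^ 2)
        - ((a ^ 2 + b ^ 2 + α ^ 2) - 2 * b * s) ^ 2
        = 4 * b * (a ^ 2 + b ^ 2 + α ^ 2) * (s - b) := by
      linear_combination (-4 * b ^ 2) * hs
    have hp : 0 < 4 * b * (a ^ 2 + b ^ 2 + α ^ 2) * (s - b) := by
      have : 0 < s - b := by linarith
      positivity
    nlinarith [hid2, mul_pos hρ2 hp]
  · rw [hF2]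
    have hMd : α ^ 4 + (a ^ 2 + b ^ 2) ^ 2 + 2 * α ^ 2 * (a ^ 2 - b ^ 2)
        = (a ^ 2 + (b - α) ^ 2) * (a ^ 2 + (α + b) ^ 2) := by ring
    rw [hMd, gt_iff_lt, div_lt_div_iff_of_pos_right (mul_pos hP1 hP2)]
    have hid3 : ((a ^ 2 + b ^ 2 + α ^ 2) - 2 * b * s) ^ 2
        - α ^ 2 * (a ^ 2 + α ^ 2 - 3 * b ^ 2)
        = (s - 2 * b) ^ 2 * (s ^ 2 + α ^ 2) := by
      linear_combination (-(s ^ 2 + α ^ 2 + a ^ 2 + b ^ 2 - 4 * b * s)) * hs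
    have hp : 0 < (s - 2 * b) ^ 2 * (s ^ 2 + α ^ 2) :=
      mul_pos (pow_pos (by linarith) 2) (by positivity)
    have key : ρ ^ 2 * α ^ 2 * (a ^ 2 + α ^ 2 - 3 * b ^ 2)
        = ρ ^ 2 * ((a ^ 2 + b ^ 2 + α ^ 2) - 2 * b * s) ^ 2
          - ρ ^ 2 * ((s - 2 * b) ^ 2 * (s ^ 2 + α ^ 2)) := by
      linear_combination (-(ρ ^ 2)) * hid3
    linarith [mul_pos hρ2 hp]
end

section
/- In the KP tau-function setting, for all integers k, l and at every point of ℝ⁷, the tau functions satisfy the bilinear identity ∂_{x₁}τ_{k,l}⁽¹⁾·τ_{k,l}⁽²⁾ − τ_{k,l}⁽¹⁾·∂_{x₁}τ_{k,l}⁽²⁾ = τ_{k,l}⁽¹'²⁾·τ_{k,l}⁽⁰⁾. -/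
open Complex Matrix

noncomputable section

/-- Partial derivative of a function on `ℝ⁷` in the `i`-th coordinate direction.
Coordinates: `0 ↦ x₁`, `1 ↦ x₂`, `2 ↦ x₃`, `3 ↦ x₋₁⁽¹⁾`, `4 ↦ x₋₁⁽²⁾`,
`5 ↦ y₁⁽¹⁾`, `6 ↦ y₁⁽²⁾`. -/
def pd (i : Fin 7) (f : (Fin 7 → ℝ) → ℂ) : (Fin 7 → ℝ) → ℂ :=
  fun X => deriv (fun s => f (Function.update X i s)) (X i)

/-- Border a square matrix with one extra column, one extra row, and corner entry `0`. -/
def bord {n : ℕ} (M : Matrix (Fin n) (Fin n) ℂ) (col row : Fin n → ℂ) :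
    Matrix (Fin (n + 1)) (Fin (n + 1)) ℂ :=
  Matrix.of fun i j =>
    if hi : (i : ℕ) < n then
      if hj : (j : ℕ) < n then M ⟨i, hi⟩ ⟨j, hj⟩ else col ⟨i, hi⟩
    else if hj : (j : ℕ) < n then row ⟨j, hj⟩ else 0

/-- Border a square matrix with two extra columns `c1, c2`, two extra rows `r1, r2`,
and a `2×2` zero corner block. -/
def bord2 {n : ℕ} (M : Matrix (Fin n) (Fin n) ℂ) (c1 c2 r1 r2 : Fin n → ℂ) :
    Matrix (Fin (n + 2)) (Fin (n + 2)) ℂ :=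
  Matrix.of fun i j =>
    if hi : (i : ℕ) < n then
      if hj : (j : ℕ) < n then M ⟨i, hi⟩ ⟨j, hj⟩
      else if (j : ℕ) = n then c1 ⟨i, hi⟩ else c2 ⟨i, hi⟩
    else if hj : (j : ℕ) < n then
      (if (i : ℕ) = n then r1 ⟨j, hj⟩ else r2 ⟨j, hj⟩)
    else 0

/-- The data of the KP tau-function setting. -/
structure KPData (N : ℕ) where
  a : ℂ
  b : ℂ
  p : Fin N → ℂ
  pb : Fin N → ℂ
  q : Fin N → ℂ
  qb : Fin N → ℂ
  r : Fin N → ℂ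
  rb : Fin N → ℂ
  xi0 : Fin N → ℂ
  xib0 : Fin N → ℂ
  Ct : Fin N → ℂ
  Cb : Fin N → ℂ
  Dt : Fin N → ℂ
  Db : Fin N → ℂ

namespace KPData

variable {N : ℕ} (K : KPData N)

/-- The nondegeneracy assumptions of the KP tau-function setting. -/
def Nondeg : Prop :=
  K.a ≠ 0 ∧ K.b ≠ 0 ∧
  (∀ i, K.p i ≠ K.a ∧ K.p i ≠ K.b) ∧
  (∀ i, K.pb i ≠ -K.a ∧ K.pb i ≠ -K.b) ∧
  (∀ i j, K.p i + K.pb j ≠ 0) ∧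
  (∀ i j, K.q i + K.qb j ≠ 0) ∧
  (∀ i j, K.r i + K.rb j ≠ 0)

/-- The phase `ξ_i`. -/
def xi (i : Fin N) (X : Fin 7 → ℝ) : ℂ :=
  K.p i * (X 0 : ℂ) + (K.p i) ^ 2 * (X 1 : ℂ) + (K.p i) ^ 3 * (X 2 : ℂ)
    + (X 3 : ℂ) / (K.p i - K.a) + (X 4 : ℂ) / (K.p i - K.b) + K.xi0 i

/-- The phase `ξ̄_j`. -/
def xib (j : Fin N) (X : Fin 7 → ℝ) : ℂ :=
  K.pb j * (X 0 : ℂ) - (K.pb j) ^ 2 * (X 1 : ℂ) + (K.pb j) ^ 3 * (X 2 : ℂ)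
    + (X 3 : ℂ) / (K.pb j + K.a) + (X 4 : ℂ) / (K.pb j + K.b) + K.xib0 j

/-- The phase `η_i = q_i y₁⁽¹⁾`. -/
def eta (i : Fin N) (X : Fin 7 → ℝ) : ℂ := K.q i * (X 5 : ℂ)

/-- The phase `η̄_j = q̄_j y₁⁽¹⁾`. -/
def etab (j : Fin N) (X : Fin 7 → ℝ) : ℂ := K.qb j * (X 5 : ℂ)

/-- The phase `χ_i = r_i y₁⁽²⁾`. -/
def chi (i : Fin N) (X : Fin 7 → ℝ) : ℂ := K.r i * (X 6 : ℂ)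

/-- The phase `χ̄_j = r̄_j y₁⁽²⁾`. -/
def chib (j : Fin N) (X : Fin 7 → ℝ) : ℂ := K.rb j * (X 6 : ℂ)

/-- The matrix entry `m_{ij}^{k,l}` (with integer exponents `k, l`). -/
def ment (k l : ℤ) (i j : Fin N) (X : Fin 7 → ℝ) : ℂ :=
  (1 / (K.p i + K.pb j)) * (-((K.p i - K.a) / (K.pb j + K.a))) ^ k
      * (-((K.p i - K.b) / (K.pb j + K.b))) ^ l
      * Complex.exp (K.xi i X + K.xib j X)
    + K.Ct i * K.Cb j * Complex.exp (K.eta i X + K.etab j X) / (K.q i + K.qb j)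
    + K.Dt i * K.Db j * Complex.exp (K.chi i X + K.chib j X) / (K.r i + K.rb j)

/-- The vector entry `Φ_{k,l,i}`. -/
def phi (k l : ℤ) (i : Fin N) (X : Fin 7 → ℝ) : ℂ :=
  (1 - K.p i / K.a) ^ k * (1 - K.p i / K.b) ^ l * Complex.exp (K.xi i X)

/-- The vector entry `Φ̄_{k,l,i}`. -/
def phib (k l : ℤ) (i : Fin N) (X : Fin 7 → ℝ) : ℂ :=
  (1 + K.pb i / K.a) ^ (-k) * (1 + K.pb i / K.b) ^ (-l) * Complex.exp (K.xib i X)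

/-- The vector entry `Ψ_i`. -/
def psi (i : Fin N) (X : Fin 7 → ℝ) : ℂ := K.Ct i * Complex.exp (K.eta i X)

/-- The vector entry `Ψ̄_i`. -/
def psib (i : Fin N) (X : Fin 7 → ℝ) : ℂ := K.Cb i * Complex.exp (K.etab i X)

/-- The vector entry `Υ_i`. -/
def ups (i : Fin N) (X : Fin 7 → ℝ) : ℂ := K.Dt i * Complex.exp (K.chi i X)

/-- The vector entry `Ῡ_i`. -/
def upsb (i : Fin N) (X : Fin 7 → ℝ) : ℂ := K.Db i * Complex.exp (K.chib i X)

/-- `τ_{k,l}⁽⁰⁾ = det M_{k,l}`. -/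
def tau0 (k l : ℤ) (X : Fin 7 → ℝ) : ℂ :=
  (Matrix.of fun i j => K.ment k l i j X).det

/-- `τ_{k,l}⁽¹⁾`: bordered with column `Φ_{k,l}` and row `-Ψ̄ᵀ`. -/
def tau1 (k l : ℤ) (X : Fin 7 → ℝ) : ℂ :=
  (bord (Matrix.of fun i j => K.ment k l i j X)
    (fun i => K.phi k l i X) (fun j => -K.psib j X)).det

/-- `τ̄_{k,l}⁽¹⁾`: bordered with column `Ψ` and row `-Φ̄_{k,l}ᵀ`. -/
def tau1b (k l : ℤ) (X : Fin 7 → ℝ) : ℂ :=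
  (bord (Matrix.of fun i j => K.ment k l i j X)
    (fun i => K.psi i X) (fun j => -K.phib k l j X)).det

/-- `τ_{k,l}⁽²⁾`: bordered with column `Φ_{k,l}` and row `-Ῡᵀ`. -/
def tau2 (k l : ℤ) (X : Fin 7 → ℝ) : ℂ :=
  (bord (Matrix.of fun i j => K.ment k l i j X)
    (fun i => K.phi k l i X) (fun j => -K.upsb j X)).det

/-- `τ̄_{k,l}⁽²⁾`: bordered with column `Υ` and row `-Φ̄_{k,l}ᵀ`. -/
def tau2b (k l : ℤ) (X : Fin 7 → ℝ) : ℂ :=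
  (bord (Matrix.of fun i j => K.ment k l i j X)
    (fun i => K.ups i X) (fun j => -K.phib k l j X)).det

/-- `τ_{k,l}⁽¹'²⁾`: double-bordered with columns `Φ_{k,l}`, `∂_{x₁}Φ_{k,l}` and rows
`-Ῡᵀ`, `-Ψ̄ᵀ`. -/
def tau12 (k l : ℤ) (X : Fin 7 → ℝ) : ℂ :=
  (bord2 (Matrix.of fun i j => K.ment k l i j X)
    (fun i => K.phi k l i X)
    (fun i => pd 0 (fun Y => K.phi k l i Y) X)
    (fun j => -K.upsb j X)
    (fun j => -K.psib j X)).det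

end KPData

/-!
Differentiating in `x₁`, `∂m_{ij} = Φ_i Φ̄_j`, so in the column expansion of the derivative of a
determinant bordered by the column `Φ` every one of the first `N` columns contributes a multiple of
the border column, hence zero. The bordering rows do not depend on `x₁`, so `∂τ⁽¹⁾` and `∂τ⁽²⁾`
are `τ⁽¹⁾` and `τ⁽²⁾` with `Φ` replaced by `∂Φ`. The identity is then the Desnanot–Jacobi identity
for a doubly bordered determinant: for invertible `M` the Schur complement writes each bordered
determinant as `det M` times the bilinear forms `r ⬝ᵥ M⁻¹ *ᵥ c`, and the general case follows by
density of invertible matrices.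
-/

open Filter Topology

namespace Matrix

theorem dense_setOf_isUnit_det {𝕜 : Type*} [NontriviallyNormedField 𝕜] {n : Type*} [Fintype n]
    [DecidableEq n] : Dense {M : Matrix n n 𝕜 | IsUnit M.det} := by
  intro M
  have hcont : Continuous fun t : 𝕜 => scalar n t + M := by
    simp only [scalar_apply]
    exact (continuous_pi fun _ => continuous_id).matrix_diagonal.add continuous_const
  have hlim : Tendsto (fun t : 𝕜 => scalar n t + M) (𝓝[≠] 0) (𝓝 M) := by
    simpa using (hcont.tendsto 0).mono_left nhdsWithin_le_nhds
  refine mem_closure_of_tendsto hlim ?_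
  filter_upwards [nhdsNE_le_cofinite (0 : 𝕜)
    (Polynomial.eventually_cofinite_not_isRoot (charpoly_monic (-M)).ne_zero)] with t ht
  rw [Polynomial.IsRoot, eval_charpoly, sub_neg_eq_add] at ht
  exact isUnit_iff_ne_zero.2 ht

end Matrix

theorem HasDerivAt.matrix_det {𝕜 𝔸 ι : Type*} [NontriviallyNormedField 𝕜] [NormedCommRing 𝔸]
    [NormedAlgebra 𝕜 𝔸] [Fintype ι] [DecidableEq ι] {B : 𝕜 → Matrix ι ι 𝔸}
    {B' : Matrix ι ι 𝔸} {x : 𝕜} (h : ∀ i j, HasDerivAt (fun s => B s i j) (B' i j) x) :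
    HasDerivAt (fun s => (B s).det) (∑ j, ((B x).updateCol j fun i => B' i j).det) x := by
  have hdet_update : ∀ j, ((B x).updateCol j fun i => B' i j).det
      = ∑ σ : Equiv.Perm ι, (Equiv.Perm.sign σ : 𝔸) *
          ((∏ i ∈ Finset.univ.erase j, B x (σ i) i) * B' (σ j) j) := fun j => by
    simp only [det_apply', ← Finset.prod_erase_mul _ _ (Finset.mem_univ j), updateCol_self]
    refine Finset.sum_congr rfl fun σ _ => ?_
    congr 2
    exact Finset.prod_congr rfl fun i hi => updateCol_ne (Finset.ne_of_mem_erase hi)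
  simp only [hdet_update]
  rw [Finset.sum_comm]
  simp only [det_apply']
  refine HasDerivAt.fun_sum fun σ _ => ?_
  simpa [Finset.mul_sum] using (HasDerivAt.fun_finsetProd (u := Finset.univ)
    fun i _ => h (σ i) i).const_mul (Equiv.Perm.sign σ : 𝔸)

section

variable {n : ℕ}

@[simp] theorem bord_castSucc_castSucc (M : Matrix (Fin n) (Fin n) ℂ) (c r : Fin n → ℂ)
    (i j : Fin n) : bord M c r i.castSucc j.castSucc = M i j := by
  simp [bord]

@[simp] theorem bord_castSucc_last (M : Matrix (Fin n) (Fin n) ℂ) (c r : Fin n → ℂ)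
    (i : Fin n) : bord M c r i.castSucc (Fin.last n) = c i := by
  simp [bord]

@[simp] theorem bord_last_castSucc (M : Matrix (Fin n) (Fin n) ℂ) (c r : Fin n → ℂ)
    (j : Fin n) : bord M c r (Fin.last n) j.castSucc = r j := by
  simp [bord]

@[simp] theorem bord_last_last (M : Matrix (Fin n) (Fin n) ℂ) (c r : Fin n → ℂ) :
    bord M c r (Fin.last n) (Fin.last n) = 0 := by
  simp [bord]

theorem bord_eq_submatrix_fromBlocks (M : Matrix (Fin n) (Fin n) ℂ) (c r : Fin n → ℂ) :
    bord M c r = (fromBlocks M (replicateCol (Fin 1) c) (replicateRow (Fin 1) r) 0).submatrix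
      finSumFinEquiv.symm finSumFinEquiv.symm := by
  ext i j
  induction i using Fin.addCases <;> induction j using Fin.addCases <;> simp [bord]

theorem bord2_eq_submatrix_fromBlocks (M : Matrix (Fin n) (Fin n) ℂ) (c₁ c₂ r₁ r₂ : Fin n → ℂ) :
    bord2 M c₁ c₂ r₁ r₂ = (fromBlocks M (of ![c₁, c₂])ᵀ (of ![r₁, r₂]) 0).submatrix
      finSumFinEquiv.symm finSumFinEquiv.symm := by
  ext i j
  induction i using Fin.addCases with
  | left i => induction j using Fin.addCases with
    | left j => simp [bord2]
    | right j => fin_cases j <;> simp [bord2]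
  | right i => induction j using Fin.addCases with
    | left j => fin_cases i <;> simp [bord2]
    | right j => simp [bord2]

theorem det_bord (M : Matrix (Fin n) (Fin n) ℂ) [Invertible M] (c r : Fin n → ℂ) :
    (bord M c r).det = M.det * -(r ⬝ᵥ ⅟M *ᵥ c) := by
  rw [bord_eq_submatrix_fromBlocks, det_submatrix_equiv_self, det_fromBlocks₁₁, det_fin_one,
    zero_sub, neg_apply, Matrix.mul_assoc]
  rfl

theorem det_bord2 (M : Matrix (Fin n) (Fin n) ℂ) [Invertible M] (c₁ c₂ r₁ r₂ : Fin n → ℂ) :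
    (bord2 M c₁ c₂ r₁ r₂).det = M.det * ((r₁ ⬝ᵥ ⅟M *ᵥ c₁) * (r₂ ⬝ᵥ ⅟M *ᵥ c₂)
      - (r₁ ⬝ᵥ ⅟M *ᵥ c₂) * (r₂ ⬝ᵥ ⅟M *ᵥ c₁)) := by
  rw [bord2_eq_submatrix_fromBlocks, det_submatrix_equiv_self, det_fromBlocks₁₁, det_fin_two]
  simp only [zero_sub, Matrix.neg_apply, neg_mul_neg, Matrix.mul_assoc]
  rfl

theorem det_bord2_mul_det_of_invertible (M : Matrix (Fin n) (Fin n) ℂ) [Invertible M]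
    (c₁ c₂ r₁ r₂ : Fin n → ℂ) :
    (bord2 M c₁ c₂ r₁ r₂).det * M.det
      = (bord M c₁ r₁).det * (bord M c₂ r₂).det - (bord M c₂ r₁).det * (bord M c₁ r₂).det := by
  simp only [det_bord, det_bord2]
  ring

theorem continuous_det_bord (c r : Fin n → ℂ) : Continuous fun M => (bord M c r).det := by
  simp only [bord_eq_submatrix_fromBlocks]
  fun_prop

theorem continuous_det_bord2 (c₁ c₂ r₁ r₂ : Fin n → ℂ) :
    Continuous fun M => (bord2 M c₁ c₂ r₁ r₂).det := by
  simp only [bord2_eq_submatrix_fromBlocks]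
  fun_prop

theorem det_bord2_mul_det (M : Matrix (Fin n) (Fin n) ℂ) (c₁ c₂ r₁ r₂ : Fin n → ℂ) :
    (bord2 M c₁ c₂ r₁ r₂).det * M.det
      = (bord M c₁ r₁).det * (bord M c₂ r₂).det - (bord M c₂ r₁).det * (bord M c₁ r₂).det := by
  refine congrFun (((continuous_det_bord2 c₁ c₂ r₁ r₂).mul continuous_id.matrix_det).ext_on
    dense_setOf_isUnit_det (((continuous_det_bord c₁ r₁).mul (continuous_det_bord c₂ r₂)).sub
      ((continuous_det_bord c₂ r₁).mul (continuous_det_bord c₁ r₂))) fun M hM => ?_) M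
  have := M.invertibleOfIsUnitDet hM
  exact det_bord2_mul_det_of_invertible M c₁ c₂ r₁ r₂

theorem hasDerivAt_det_bord {𝕜 : Type*} [NontriviallyNormedField 𝕜] [NormedAlgebra 𝕜 ℂ]
    {M : 𝕜 → Matrix (Fin n) (Fin n) ℂ} {c : 𝕜 → Fin n → ℂ} {c' d r : Fin n → ℂ} {x : 𝕜}
    (hM : ∀ i j, HasDerivAt (fun s => M s i j) (c x i * d j) x)
    (hc : ∀ i, HasDerivAt (fun s => c s i) (c' i) x) :
    HasDerivAt (fun s => (bord (M s) (c s) r).det) (bord (M x) c' r).det x := by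
  refine (HasDerivAt.matrix_det (B' := bord (of fun i j => c x i * d j) c' 0)
    fun i j => ?_).congr_deriv ?_
  · induction i using Fin.lastCases <;> induction j using Fin.lastCases <;>
      simp only [bord_castSucc_castSucc, bord_castSucc_last, bord_last_castSucc, bord_last_last,
        of_apply, Pi.zero_apply]
    exacts [hasDerivAt_const _ _, hasDerivAt_const _ _, hc _, hM _ _]
  · rw [Fin.sum_univ_castSucc, Finset.sum_eq_zero, zero_add]
    · congr
      ext i j
      induction j using Fin.lastCases <;> induction i using Fin.lastCases <;> simp
    · intro j _
      have hcol : (fun i => bord (of fun i j => c x i * d j) c' 0 i j.castSucc)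
          = d j • fun i => bord (M x) (c x) r i (Fin.last n) := by
        ext i
        induction i using Fin.lastCases <;> simp [mul_comm]
      rw [hcol, det_updateCol_smul, det_updateCol_eq_zero (Fin.castSucc_lt_last j).ne', mul_zero]

end

theorem one_sub_div_zpow_mul_one_add_div_zpow_neg {F : Type*} [Field F] {a : F} (ha : a ≠ 0)
    (p q : F) (k : ℤ) : (1 - p / a) ^ k * (1 + q / a) ^ (-k) = (-((p - a) / (q + a))) ^ k := by
  rw [_root_.zpow_neg, ← _root_.inv_zpow, ← mul_zpow]
  congr 1
  rw [one_sub_div ha, one_add_div ha, inv_div, div_mul_div_cancel₀ ha, ← neg_div, neg_sub,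
    add_comm]

theorem hasDerivAt_cexp_affine (z w : ℂ) (x : ℝ) :
    HasDerivAt (fun s : ℝ => cexp (z + w * ((s : ℂ) - x))) (w * cexp z) x := by
  simpa [mul_comm] using
    ((((hasDerivAt_id (x : ℂ)).sub_const (x : ℂ)).const_mul w).const_add z).cexp.comp_ofReal

namespace KPData

variable {N : ℕ} (K : KPData N) (X : Fin 7 → ℝ) (s : ℝ)

theorem xi_update_zero (i : Fin N) :
    K.xi i (Function.update X 0 s) = K.xi i X + K.p i * ((s : ℂ) - X 0) := by
  simp only [xi, Function.update_self, ne_eq, Fin.reduceEq, not_false_eq_true,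
    Function.update_of_ne]
  ring

theorem xib_update_zero (j : Fin N) :
    K.xib j (Function.update X 0 s) = K.xib j X + K.pb j * ((s : ℂ) - X 0) := by
  simp only [xib, Function.update_self, ne_eq, Fin.reduceEq, not_false_eq_true,
    Function.update_of_ne]
  ring

theorem psib_update_zero (j : Fin N) : K.psib j (Function.update X 0 s) = K.psib j X := by
  simp [psib, etab]

theorem upsb_update_zero (j : Fin N) : K.upsb j (Function.update X 0 s) = K.upsb j X := by
  simp [upsb, chib]

theorem hasDerivAt_phi_update_zero (k l : ℤ) (i : Fin N) :
    HasDerivAt (fun s => K.phi k l i (Function.update X 0 s)) (pd 0 (K.phi k l i) X) (X 0) := by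
  refine DifferentiableAt.hasDerivAt ?_
  simp only [phi, xi_update_zero]
  exact ((hasDerivAt_cexp_affine _ _ _).const_mul _).differentiableAt

theorem hasDerivAt_ment_update_zero (hnd : K.Nondeg) (k l : ℤ) (i j : Fin N) :
    HasDerivAt (fun s => K.ment k l i j (Function.update X 0 s))
      (K.phi k l i X * K.phib k l j X) (X 0) := by
  obtain ⟨ha, hb, -, -, hp, -, -⟩ := hnd
  have h := ((hasDerivAt_cexp_affine (K.xi i X + K.xib j X) (K.p i + K.pb j) (X 0)).const_mul
    (1 / (K.p i + K.pb j) * (-((K.p i - K.a) / (K.pb j + K.a))) ^ k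
      * (-((K.p i - K.b) / (K.pb j + K.b))) ^ l)).add_const
    (K.Ct i * K.Cb j * cexp (K.eta i X + K.etab j X) / (K.q i + K.qb j)
      + K.Dt i * K.Db j * cexp (K.chi i X + K.chib j X) / (K.r i + K.rb j))
  refine (h.congr_deriv ?_).congr_of_eventuallyEq (Eventually.of_forall fun s => ?_)
  · unfold phi phib
    rw [← one_sub_div_zpow_mul_one_add_div_zpow_neg ha,
      ← one_sub_div_zpow_mul_one_add_div_zpow_neg hb, Complex.exp_add]
    field_simp [hp i j]
  · simp only [ment, xi_update_zero, xib_update_zero]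
    rw [add_add_add_comm, ← add_mul]
    simp [eta, etab, chi, chib, add_assoc]

theorem pd_zero_det_bord_phi (hnd : K.Nondeg) (k l : ℤ) (R : Fin N → (Fin 7 → ℝ) → ℂ)
    (hR : ∀ j s, R j (Function.update X 0 s) = R j X) :
    pd 0 (fun Y => (bord (of fun i j => K.ment k l i j Y) (fun i => K.phi k l i Y)
      (fun j => R j Y)).det) X
      = (bord (of fun i j => K.ment k l i j X) (fun i => pd 0 (K.phi k l i) X)
          (fun j => R j X)).det := by
  have hX : Function.update X 0 (X 0) = X := Function.update_eq_self 0 X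
  have hder := hasDerivAt_det_bord (r := fun j => R j X) (d := fun j => K.phib k l j X)
    (M := fun s => of fun i j => K.ment k l i j (Function.update X 0 s))
    (c := fun s i => K.phi k l i (Function.update X 0 s))
    (fun i j => by simpa only [of_apply, hX] using K.hasDerivAt_ment_update_zero X hnd k l i j)
    (fun i => K.hasDerivAt_phi_update_zero X k l i)
  simp only [hX] at hder
  simp only [pd, hR]
  exact hder.deriv

end KPData

theorem stmt16_general {N : ℕ} (K : KPData N) (hnd : K.Nondeg) :
    ∀ (k l : ℤ) (X : Fin 7 → ℝ),
      pd 0 (K.tau1 k l) X * K.tau2 k l X - K.tau1 k l X * pd 0 (K.tau2 k l) X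
        = K.tau12 k l X * K.tau0 k l X := by
  intro k l X
  have h1 : pd 0 (K.tau1 k l) X = _ := K.pd_zero_det_bord_phi X hnd k l (fun j Y => -K.psib j Y)
    fun j s => by rw [KPData.psib_update_zero]
  have h2 : pd 0 (K.tau2 k l) X = _ := K.pd_zero_det_bord_phi X hnd k l (fun j Y => -K.upsb j Y)
    fun j s => by rw [KPData.upsb_update_zero]
  rw [h1, h2, KPData.tau1, KPData.tau2, KPData.tau12, KPData.tau0]
  linear_combination -det_bord2_mul_det (of fun i j => K.ment k l i j X) (fun i => K.phi k l i X)
    (fun i => pd 0 (K.phi k l i) X) (fun j => -K.upsb j X) (fun j => -K.psib j X)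

theorem stmt16 {N : ℕ} (hN : 1 ≤ N) (K : KPData N) (hnd : K.Nondeg) :
    ∀ (k l : ℤ) (X : Fin 7 → ℝ),
      pd 0 (K.tau1 k l) X * K.tau2 k l X - K.tau1 k l X * pd 0 (K.tau2 k l) X
        = K.tau12 k l X * K.tau0 k l X :=
  stmt16_general K hnd
end
end
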